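/- arXiv:1512.00478 — 6 statements merged into one kernel-verified Lean document; each statement's English description precedes it below -/
import Mathlib

section
/- For every graph F of order n ≥ 2 and every integer s with 1 ≤ s ≤ (n-1)^2, the complete graph K_s is F-WORM colorable and its F-WORM lower chromatic number equals ⌈s/(n-1)⌉. -/
open SimpleGraph

/-- A vertex coloring `c` of `G` is an `F`-WORM coloring if no subgraph of `G`
isomorphic to `F` is monochromatic or rainbow. -/
def IsFWORM {α β : Type*} (F : SimpleGraph α) (G : SimpleGraph β) (c : β → ℕ) : Prop :=
  ∀ f : F →g G, Function.Injective f →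
    (∃ u v : α, c (f u) ≠ c (f v)) ∧ (∃ u v : α, u ≠ v ∧ c (f u) = c (f v))

/-- `G` is `F`-WORM colorable if it admits an `F`-WORM coloring. -/
def FWORMColorable {α β : Type*} (F : SimpleGraph α) (G : SimpleGraph β) : Prop :=
  ∃ c : β → ℕ, IsFWORM F G c

/-- `W^-(G,F)`: the minimum number of colors used in an `F`-WORM coloring of `G`. -/
noncomputable def wormLower {α β : Type*} (F : SimpleGraph α) (G : SimpleGraph β) : ℕ :=
  sInf {k | ∃ c : β → ℕ, IsFWORM F G c ∧ (Set.range c).ncard = k}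

/-- For every graph `F` of order `n ≥ 2` and every `1 ≤ s ≤ (n-1)^2`, the complete
graph `K_s` is `F`-WORM colorable and `W^-(K_s,F) = ⌈s/(n-1)⌉`
(written as `(s + n - 2) / (n - 1)` in natural-number arithmetic). -/
theorem stmt1 {α : Type} [Fintype α] (F : SimpleGraph α) (n s : ℕ)
    (hn : 2 ≤ n) (hcard : Fintype.card α = n) (hs1 : 1 ≤ s) (hs2 : s ≤ (n - 1) ^ 2) :
    FWORMColorable F (⊤ : SimpleGraph (Fin s)) ∧
      wormLower F (⊤ : SimpleGraph (Fin s)) = (s + n - 2) / (n - 1) := by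
  obtain ⟨m, rfl⟩ : ∃ m, n = m + 1 := ⟨n - 1, by omega⟩
  have hm : 1 ≤ m := by omega
  have hs2' : s ≤ m * m := by
    have h0 : m + 1 - 1 = m := by omega
    rw [h0, pow_two] at hs2; exact hs2
  -- the canonical coloring
  set c0 : Fin s → ℕ := fun i => (i : ℕ) / m with hc0
  -- c0 is an F-WORM coloring
  have hworm : IsFWORM F (⊤ : SimpleGraph (Fin s)) c0 := by
    intro f hf
    constructor
    · by_contra h
      push_neg at h
      -- all colors equal ⇒ u ↦ (f u) % m is injective into Fin m
      have hginj : Function.Injective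
          (fun u : α => (⟨(f u : ℕ) % m, Nat.mod_lt _ (by omega)⟩ : Fin m)) := by
        intro u v huv
        apply hf
        simp only [Fin.mk.injEq] at huv
        have h2 : (f u : ℕ) / m = (f v : ℕ) / m := h u v
        have d1 := Nat.div_add_mod (f u : ℕ) m
        have d2 := Nat.div_add_mod (f v : ℕ) m
        refine Fin.ext ?_
        have he : (f u : ℕ) = m * ((f v : ℕ) / m) + (f v : ℕ) % m := by
          rw [← h2, ← huv, d1]
        exact he.trans d2
      have h3 := Fintype.card_le_of_injective _ hginj
      rw [hcard, Fintype.card_fin] at h3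
      omega
    · -- pigeonhole: colors live in Fin m, card α = m + 1 > m
      have hlt : ∀ u : α, (f u : ℕ) / m < m := by
        intro u
        have : (f u : ℕ) < m * m := lt_of_lt_of_le (f u).isLt hs2'
        exact Nat.div_lt_of_lt_mul this
      obtain ⟨u, v, huv, he⟩ :=
        Fintype.exists_ne_map_eq_of_card_lt
          (fun u : α => (⟨(f u : ℕ) / m, hlt u⟩ : Fin m))
          (by rw [hcard, Fintype.card_fin]; omega)
      exact ⟨u, v, huv, congrArg Fin.val he⟩
  -- number of colors of c0
  have hrange : Set.range c0 = ↑(Finset.range ((s - 1) / m + 1)) := by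
    ext t
    simp only [Set.mem_range, Finset.coe_range, Set.mem_Iio]
    constructor
    · rintro ⟨i, rfl⟩
      have : (i : ℕ) / m ≤ (s - 1) / m :=
        Nat.div_le_div_right (by omega)
      simpa [hc0] using Nat.lt_succ_of_le this
    · intro ht
      have ht' : t ≤ (s - 1) / m := by omega
      have h1 : t * m ≤ (s - 1) / m * m := Nat.mul_le_mul_right m ht'
      have h2 : (s - 1) / m * m ≤ s - 1 := Nat.div_mul_le_self _ _
      refine ⟨⟨t * m, lt_of_le_of_lt (h1.trans h2) (Nat.sub_lt hs1 one_pos)⟩, ?_⟩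
      simp [hc0, Nat.mul_div_cancel _ (by omega : 0 < m)]
  have hncard : (Set.range c0).ncard = (s - 1) / m + 1 := by
    rw [hrange, Set.ncard_coe_finset, Finset.card_range]
  have hK : (s + (m + 1) - 2) / (m + 1 - 1) = (s - 1) / m + 1 := by
    have h1 : s + (m + 1) - 2 = (s - 1) + m := by omega
    have h2 : m + 1 - 1 = m := by omega
    rw [h1, h2, Nat.add_div_right _ (by omega)]
  -- lower bound: any F-WORM coloring uses at least ⌈s/m⌉ colors
  have hlb : ∀ k ∈ {k | ∃ c : Fin s → ℕ, IsFWORM F (⊤ : SimpleGraph (Fin s)) c ∧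
      (Set.range c).ncard = k}, (s + (m + 1) - 2) / (m + 1 - 1) ≤ k := by
    rintro k ⟨c, hc, rfl⟩
    have hRcoe : Set.range c = ↑(Finset.image c Finset.univ) := by
      ext x; simp
    rw [hRcoe, Set.ncard_coe_finset]
    set R := Finset.image c Finset.univ with hR
    -- every fiber has at most m elements
    have hfib : ∀ v : ℕ, (Finset.univ.filter (fun i => c i = v)).card ≤ m := by
      intro v
      by_contra hbig
      push_neg at hbig
      obtain ⟨T, hTsub, hTcard⟩ :=
        Finset.exists_subset_card_eq (Nat.succ_le_of_lt hbig)
      have hTc : Fintype.card α = Fintype.card T := by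
        rw [hcard, Fintype.card_coe, hTcard]
      let e : α ≃ T := Fintype.equivOfCardEq hTc
      let g : F →g (⊤ : SimpleGraph (Fin s)) :=
        ⟨fun u => (e u : Fin s), by
          intro a b hab
          simp only [top_adj]
          intro hcontr
          exact hab.ne (e.injective (Subtype.ext hcontr))⟩
      have hginj : Function.Injective g := by
        intro a b hab
        exact e.injective (Subtype.ext hab)
      obtain ⟨⟨u, w, hne⟩, -⟩ := hc g hginj
      apply hne
      have hu : (e u : Fin s) ∈ T := (e u).2
      have hw : (e w : Fin s) ∈ T := (e w).2
      have hu' := Finset.mem_filter.mp (hTsub hu)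
      have hw' := Finset.mem_filter.mp (hTsub hw)
      show c (e u : Fin s) = c (e w : Fin s)
      rw [hu'.2, hw'.2]
    -- sum of fibers
    have hsum : s ≤ R.card * m := by
      have hcf :=
        Finset.card_eq_sum_card_fiberwise
          (fun x (_ : x ∈ (Finset.univ : Finset (Fin s))) =>
            Finset.mem_image_of_mem c (Finset.mem_univ x))
      calc s = (Finset.univ : Finset (Fin s)).card := by simp
        _ = ∑ v ∈ R, (Finset.univ.filter (fun i => c i = v)).card := hcf
        _ ≤ ∑ _v ∈ R, m := Finset.sum_le_sum (fun v _ => hfib v)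
        _ = R.card * m := by rw [Finset.sum_const, smul_eq_mul]
    have hdlt : (s - 1) / m < R.card := by
      rw [Nat.div_lt_iff_lt_mul (by omega : 0 < m)]
      exact lt_of_lt_of_le (by omega : s - 1 < s) hsum
    rw [hK]
    exact Nat.succ_le_of_lt hdlt
  constructor
  · exact ⟨c0, hworm⟩
  · apply le_antisymm
    · apply Nat.sInf_le
      exact ⟨c0, hworm, by rw [hncard, hK]⟩
    · exact le_csInf ⟨_, c0, hworm, rfl⟩ (fun k hk => by
        have := hlb _ hk
        omega)
end

section
/- Let n ≥ 3 and let G be a graph with χ(G) = ω(G) (e.g., a perfect graph). Then G is K_n-WORM colorable if and only if ω(G) ≤ (n-1)^2. -/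
open SimpleGraph

/-- A vertex coloring `c` is a `K_n`-WORM coloring of `G` if no set of `n`
pairwise adjacent vertices is monochromatic and none is rainbow. -/
def IsKnWORM {β : Type*} (G : SimpleGraph β) (n : ℕ) (c : β → ℕ) : Prop :=
  ∀ s : Finset β, G.IsNClique n s →
    (∃ u ∈ s, ∃ v ∈ s, c u ≠ c v) ∧ (∃ u ∈ s, ∃ v ∈ s, u ≠ v ∧ c u = c v)

/-!
Among more than `m²` pairwise adjacent vertices, a coloring either uses more than `m` colors,
giving a rainbow `K_{m+1}`, or by pigeonhole gives some color to more than `m` of them,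
giving a monochromatic one; so `ω(G) ≤ m²` is necessary for a `K_{m+1}`-WORM coloring.
Conversely, if `χ(G) = ω(G) ≤ m²`, take a proper coloring `C` with colors `0, …, m² - 1` and
recolor `v` by `C v / m`. A clique gets distinct colors `C v`, and at most `m` of them share a
quotient by `m`, so no `K_{m+1}` is monochromatic; there are only `m` quotients, so none is rainbow.
-/

namespace Finset

variable {α : Type*}

theorem exists_monochromatic_or_rainbow {γ : Type*} [DecidableEq γ] {s : Finset α} (c : α → γ)
    {a b : ℕ} (hs : a * b < #s) :
    (∃ t ⊆ s, #t = a + 1 ∧ ∀ x ∈ t, ∀ y ∈ t, c x = c y) ∨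
      (∃ t ⊆ s, #t = b + 1 ∧ Set.InjOn c t) := by
  by_cases hcolors : b < #(s.image c)
  · right
    obtain ⟨T, hTs, hT⟩ := exists_subset_card_eq hcolors
    have hsurj : Set.SurjOn c s T := fun y hy => by simpa using hTs hy
    obtain ⟨t, hts, hinj, himage⟩ := exists_subset_injOn_image_eq_of_surjOn _ T hsurj
    exact ⟨t, mod_cast hts, by rw [← card_image_of_injOn hinj, himage, hT], hinj⟩
  · left
    have hfew : #(s.image c) * a < #s :=
      lt_of_le_of_lt (Nat.mul_le_mul_right a (not_lt.1 hcolors)) (by rwa [Nat.mul_comm])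
    obtain ⟨y, -, hy⟩ :=
      exists_lt_card_fiber_of_mul_lt_card_of_maps_to (fun x hx => mem_image_of_mem c hx) hfew
    obtain ⟨t, hts, ht⟩ := exists_subset_card_eq (Nat.succ_le_of_lt hy)
    have hcy : ∀ x ∈ t, c x = y := fun x hx => (mem_filter.1 (hts hx)).2
    exact ⟨t, hts.trans (filter_subset _ _), ht, fun x hx z hz => (hcy x hx).trans (hcy z hz).symm⟩

theorem exists_div_ne_of_injOn {s : Finset α} {f : α → ℕ} (hf : Set.InjOn f s) {m : ℕ}
    (hm : 0 < m) (hs : m < #s) : ∃ u ∈ s, ∃ v ∈ s, f u / m ≠ f v / m := by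
  by_contra! hdiv
  -- with a common quotient, `f` is recovered from the remainder mod `m`
  have hinj : Set.InjOn (fun x => f x % m) s := fun u hu v hv huv =>
    hf hu hv <| by rw [← Nat.div_add_mod (f u) m, ← Nat.div_add_mod (f v) m, hdiv u hu v hv,
      show f u % m = f v % m from huv]
  have hmaps : Set.MapsTo (fun x => f x % m) s (range m) := fun x _ => by
    simpa using Nat.mod_lt (f x) hm
  exact absurd (card_le_card_of_injOn _ hmaps hinj) (by simpa using hs)

theorem exists_ne_div_eq_of_lt_mul {s : Finset α} {f : α → ℕ} {m : ℕ}
    (hf : ∀ x ∈ s, f x < m * m) (hs : m < #s) : ∃ u ∈ s, ∃ v ∈ s, u ≠ v ∧ f u / m = f v / m :=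
  exists_ne_map_eq_of_card_lt_of_maps_to (t := range m) (by simpa using hs)
    fun x hx => by simpa using Nat.div_lt_of_lt_mul (hf x hx)

end Finset

open Finset

namespace IsKnWORM

variable {β : Type*} {G : SimpleGraph β} {m : ℕ} {c : β → ℕ}

theorem card_le_of_isClique (hc : IsKnWORM G (m + 1) c) {s : Finset β} (hs : G.IsClique s) :
    #s ≤ m ^ 2 := by
  by_contra! hbig
  rcases exists_monochromatic_or_rainbow c (a := m) (b := m) (by rwa [← sq])
    with ⟨t, hts, ht, hmono⟩ | ⟨t, hts, ht, hinj⟩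
  · obtain ⟨⟨u, hu, v, hv, huv⟩, -⟩ := hc t ⟨hs.subset hts, ht⟩
    exact huv (hmono u hu v hv)
  · obtain ⟨-, u, hu, v, hv, huv, hcuv⟩ := hc t ⟨hs.subset hts, ht⟩
    exact huv (hinj hu hv hcuv)

theorem cliqueNum_le (hc : IsKnWORM G (m + 1) c) : G.cliqueNum ≤ m ^ 2 := by
  obtain ⟨s, hs⟩ := G.exists_isNClique_cliqueNum
  exact hs.card_eq ▸ hc.card_le_of_isClique hs.isClique

end IsKnWORM

theorem SimpleGraph.Coloring.isKnWORM_div {β : Type*} {G : SimpleGraph β} {m : ℕ} (hm : 0 < m)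
    (C : G.Coloring (Fin (m ^ 2))) : IsKnWORM G (m + 1) (fun v => (C v : ℕ) / m) := by
  intro s hs
  have hinj : Set.InjOn (fun v => (C v : ℕ)) s := fun u hu v hv huv => by
    by_contra hne
    exact C.valid (hs.isClique hu hv hne) (Fin.ext huv)
  have hlt : ∀ v ∈ s, (C v : ℕ) < m * m := fun v _ => sq m ▸ (C v).isLt
  have hcard : m < #s := by rw [hs.card_eq]; exact Nat.lt_succ_self m
  exact ⟨exists_div_ne_of_injOn hinj hm hcard, exists_ne_div_eq_of_lt_mul hlt hcard⟩

theorem stmt5_general {β : Type} (G : SimpleGraph β) (n : ℕ) (hn : 3 ≤ n)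
    (hperf : G.chromaticNumber = (G.cliqueNum : ℕ∞)) :
    (∃ c : β → ℕ, IsKnWORM G n c) ↔ G.cliqueNum ≤ (n - 1) ^ 2 := by
  obtain ⟨m, rfl⟩ : ∃ m, n = m + 1 := ⟨n - 1, by omega⟩
  rw [Nat.add_sub_cancel]
  refine ⟨fun ⟨c, hc⟩ => hc.cliqueNum_le, fun hω => ?_⟩
  have hcol : G.Colorable (m ^ 2) := by
    rw [← chromaticNumber_le_iff_colorable, hperf]
    exact_mod_cast hω
  obtain ⟨C⟩ := hcol
  exact ⟨_, C.isKnWORM_div (by omega)⟩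

/-- Let `n ≥ 3` and `G` a graph with `χ(G) = ω(G)`. Then `G` is `K_n`-WORM
colorable if and only if `ω(G) ≤ (n-1)^2`. -/
theorem stmt5 {β : Type} [Fintype β] (G : SimpleGraph β) (n : ℕ) (hn : 3 ≤ n)
    (hperf : G.chromaticNumber = (G.cliqueNum : ℕ∞)) :
    (∃ c : β → ℕ, IsKnWORM G n c) ↔ G.cliqueNum ≤ (n - 1) ^ 2 :=
  stmt5_general G n hn hperf
end

section
/- Let n ≥ 3 and let G be a graph with a proper vertex coloring using at most (n-1)^2 colors. Then G is K_n-WORM colorable. Concretely, merging the color classes into n-1 groups, each consisting of at most n-1 original classes, yields a K_n-WORM coloring of G with at most n-1 colors. -/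
open SimpleGraph

/-- If `n ≥ 3` and `G` has a proper coloring with at most `(n-1)^2` colors,
then `G` is `K_n`-WORM colorable: merging color classes into `n-1` groups of at
most `n-1` classes each yields a `K_n`-WORM coloring with at most `n-1` colors.
Concretely, there is a map `g` from the `(n-1)^2` proper colors onto at most
`n-1` merged colors, each merged color comprising at most `n-1` proper classes,
such that `g ∘ c₀` is a `K_n`-WORM coloring. -/
theorem stmt6 {β : Type} (G : SimpleGraph β) (n : ℕ) (hn : 3 ≤ n)
    (c₀ : β → Fin ((n - 1) ^ 2)) (hc₀ : ∀ u v, G.Adj u v → c₀ u ≠ c₀ v) :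
    ∃ g : Fin ((n - 1) ^ 2) → ℕ,
      (Set.range g).ncard ≤ n - 1 ∧
      (∀ j : ℕ, {i | g i = j}.ncard ≤ n - 1) ∧
      IsKnWORM G n (g ∘ c₀) := by
  have hm : 0 < n - 1 := by omega
  refine ⟨fun i => i.val / (n - 1), ?_, ?_, ?_⟩
  · calc (Set.range fun i : Fin ((n-1)^2) => i.val / (n - 1)).ncard
        ≤ (Set.Iio (n - 1)).ncard := by
          apply Set.ncard_le_ncard
          · rintro x ⟨i, rfl⟩
            have hi := i.isLt
            simp only [Set.mem_Iio]
            exact Nat.div_lt_of_lt_mul (lt_of_lt_of_eq hi (sq _))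
          · exact Set.finite_Iio _
      _ = n - 1 := by
          rw [← Finset.coe_range, Set.ncard_coe_finset, Finset.card_range]
  · intro j
    have hfin : {i : Fin ((n-1)^2) | i.val / (n - 1) = j}.Finite := Set.toFinite _
    have hinj : Set.InjOn (fun i : Fin ((n-1)^2) => i.val % (n - 1))
        {i | i.val / (n - 1) = j} := by
      intro a ha b hb hab
      simp only [Set.mem_setOf_eq] at ha hb
      have hab' : a.val % (n - 1) = b.val % (n - 1) := hab
      apply Fin.ext
      have ha2 : (n - 1) * j + a.val % (n - 1) = a.val := by
        rw [← ha]; exact Nat.div_add_mod _ _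
      have hb2 : (n - 1) * j + b.val % (n - 1) = b.val := by
        rw [← hb]; exact Nat.div_add_mod _ _
      omega
    calc {i : Fin ((n-1)^2) | i.val / (n - 1) = j}.ncard
        = ((fun i : Fin ((n-1)^2) => i.val % (n - 1)) ''
            {i | i.val / (n - 1) = j}).ncard :=
          (Set.ncard_image_of_injOn hinj).symm
      _ ≤ (Set.Iio (n - 1)).ncard := by
          apply Set.ncard_le_ncard
          · rintro x ⟨i, _, rfl⟩
            exact Nat.mod_lt _ hm
          · exact Set.finite_Iio _
      _ = n - 1 := by
          rw [← Finset.coe_range, Set.ncard_coe_finset, Finset.card_range]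
  · intro s hs
    have hcard := hs.card_eq
    have hclique := hs.isClique
    -- c₀ injective on s
    have hinj : Set.InjOn c₀ (s : Set β) := by
      intro u hu v hv huv
      by_contra hne
      exact hc₀ u v (hclique hu hv hne) huv
    constructor
    · -- not monochromatic
      by_contra h
      push_neg at h
      have himg : (s.image fun x => (c₀ x).val / (n - 1)).card ≤ 1 := by
        apply Finset.card_le_one.mpr
        intro a ha b hb
        simp only [Finset.mem_image] at ha hb
        obtain ⟨u, hu, rfl⟩ := ha
        obtain ⟨v, hv, rfl⟩ := hb
        exact h u hu v hv
      -- s.image c₀ has card n, all mapped into one fiber of size ≤ n-1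
      have hc : (s.image c₀).card = n := by
        rw [Finset.card_image_of_injOn hinj, hcard]
      obtain ⟨u, hu⟩ : s.Nonempty := Finset.card_pos.mp (by omega)
      set j := (c₀ u).val / (n - 1) with hj
      have hsub : (s.image c₀ : Set (Fin ((n-1)^2))) ⊆
          {i | i.val / (n - 1) = j} := by
        intro i hi
        simp only [Finset.coe_image, Set.mem_image] at hi
        obtain ⟨v, hv, rfl⟩ := hi
        exact h v hv u hu
      have h1 : {i : Fin ((n-1)^2) | i.val / (n - 1) = j}.ncard ≤ n - 1 := by
        have hfin : {i : Fin ((n-1)^2) | i.val / (n - 1) = j}.Finite :=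
          Set.toFinite _
        have hinj2 : Set.InjOn (fun i : Fin ((n-1)^2) => i.val % (n - 1))
            {i | i.val / (n - 1) = j} := by
          intro a ha b hb hab
          simp only [Set.mem_setOf_eq] at ha hb
          have hab' : a.val % (n - 1) = b.val % (n - 1) := hab
          apply Fin.ext
          have ha2 : (n - 1) * j + a.val % (n - 1) = a.val := by
            rw [← ha]; exact Nat.div_add_mod _ _
          have hb2 : (n - 1) * j + b.val % (n - 1) = b.val := by
            rw [← hb]; exact Nat.div_add_mod _ _
          omega
        calc {i : Fin ((n-1)^2) | i.val / (n - 1) = j}.ncard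
            = ((fun i : Fin ((n-1)^2) => i.val % (n - 1)) ''
                {i | i.val / (n - 1) = j}).ncard :=
              (Set.ncard_image_of_injOn hinj2).symm
          _ ≤ (Set.Iio (n - 1)).ncard := by
              apply Set.ncard_le_ncard
              · rintro x ⟨i, _, rfl⟩
                exact Nat.mod_lt _ hm
              · exact Set.finite_Iio _
          _ = n - 1 := by
            rw [← Finset.coe_range, Set.ncard_coe_finset, Finset.card_range]
      have h2 : ((s.image c₀ : Set (Fin ((n-1)^2)))).ncard ≤ n - 1 :=
        le_trans (Set.ncard_le_ncard hsub (Set.toFinite _)) h1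
      rw [Set.ncard_coe_finset, hc] at h2
      omega
    · -- not rainbow: pigeonhole
      have hmap : ∀ x ∈ s, (c₀ x).val / (n - 1) ∈ Finset.range (n - 1) := by
        intro x _
        have hi := (c₀ x).isLt
        exact Finset.mem_range.mpr (Nat.div_lt_of_lt_mul (lt_of_lt_of_eq hi (sq _)))
      have hlt : (Finset.range (n - 1)).card < s.card := by
        rw [Finset.card_range, hcard]; omega
      obtain ⟨u, hu, v, hv, hne, heq⟩ :=
        Finset.exists_ne_map_eq_of_card_lt_of_maps_to hlt hmap
      exact ⟨u, hu, v, hv, hne, heq⟩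
end

section
/- Let F be a graph of order n with minimum degree δ ≥ 2, and let G_1(F) be the gadget graph defined as follows: vertex set S ∪ S' ∪ {x,y} with |S'| = n - δ - 1, |S ∪ S'| = (n-1)^2 - 1, S ∪ S' inducing a complete graph, and x, y each adjacent to exactly the vertices of S (and x not adjacent to y). Then G_1(F) is F-WORM colorable, and in every F-WORM coloring of G_1(F) the vertices x and y receive the same color, and this color appears on exactly n-2 vertices of S ∪ S'. -/
open SimpleGraph

/-!
Any `n` vertices of the clique `I = S ∪ S'` carry a copy of `F`, so an `F`-WORM coloring uses at
most `n - 1` colors on `I`, each on at most `n - 1` vertices. As `|I| = (n - 1)² - 1`, the total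
deficit `∑ (n - 1 - |class|)` over the colors of `I` is at most one: at most one color of `I` has
fewer than `n - 1` vertices there, and it has exactly `n - 2`.

Embedding `F` with a vertex of degree `δ` sent to an outer vertex `z` and its neighbors into `S`
shows that `c z` is such a deficient color. It occurs in `S`: as `|S| > (n - 1)(n - 2)`, `S` shows
`n - 1` colors, and otherwise one vertex of each of them gives a rainbow copy. Its class in `I` has
at most `n - 2` vertices: otherwise, as `|S'| = n - δ - 1`, at least `δ` of them lie in `S` and give
a monochromatic copy. Hence `c x = c y`.

Conversely, give `x`, `y`, `S'` and `δ - 1` vertices of `S` the color `0` and split the other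
`(n - 1)(n - 2)` inner vertices into `n - 2` classes of size `n - 1`. Only `n - 1` colors are used,
and a copy of `F` inside the class of `0` would need `n` vertices while avoiding `x` and `y`, which
have only `δ - 1` neighbors in that class.
-/

open Finset

namespace Finset

variable {β γ : Type*} [DecidableEq γ]

theorem exists_subset_injOn_image_eq (T : Finset β) (c : β → γ) :
    ∃ R ⊆ T, Set.InjOn c R ∧ R.image c = T.image c := by
  obtain ⟨R, hRT, hR, himg⟩ := exists_subset_injOn_image_eq_of_surjOn (T : Set β) (T.image c)
    (by rw [coe_image]; exact Set.surjOn_image c T)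
  exact ⟨R, coe_subset.mp hRT, hR, himg⟩

theorem exists_card_filter_le (K : Finset β) {k m : ℕ} (hK : #K ≤ k * m) :
    ∃ g : β → ℕ, (∀ v ∈ K, g v < k) ∧ ∀ j, #{v ∈ K | g v = j} ≤ m := by
  classical
  let e : β → ℕ := fun v => if h : v ∈ K then K.equivFin ⟨v, h⟩ else 0
  have he_lt : ∀ v ∈ K, e v < #K := fun v hv => by simp [e, hv]
  have he_inj : Set.InjOn e K := fun v hv w hw h => by
    rw [mem_coe] at hv hw
    simp only [e, dif_pos hv, dif_pos hw, Fin.val_inj] at h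
    exact congrArg Subtype.val (K.equivFin.injective h)
  refine ⟨fun v => e v / m, fun v hv => Nat.div_lt_of_lt_mul
    ((he_lt v hv).trans_le (hK.trans_eq (mul_comm k m))), fun j => ?_⟩
  rcases Nat.eq_zero_or_pos m with rfl | hm
  · exact (card_le_card (filter_subset _ _)).trans (hK.trans_eq (mul_zero k))
  calc #{v ∈ K | e v / m = j} ≤ #(range m) := by
        refine card_le_card_of_injOn (fun v => e v % m)
          (fun v _ => mem_range.mpr (Nat.mod_lt _ hm)) fun v hv w hw h => ?_
        simp only [coe_filter, Set.mem_ofPred_eq] at hv hw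
        refine he_inj hv.1 hw.1 ?_
        rw [← Nat.div_add_mod (e v) m, ← Nat.div_add_mod (e w) m, hv.2, hw.2]
        simpa using h
    _ = m := card_range m

theorem exists_equiv_insert {α : Type*} [Fintype α] [DecidableEq α] [DecidableEq β]
    {v₀ : α} {N : Finset α} (hv₀N : v₀ ∉ N) {z : β} {A T : Finset β} (hzT : z ∉ T)
    (hAT : A ⊆ T) (hNA : #N = #A) (hT : Fintype.card α = #T + 1) :
    ∃ g : α ≃ (insert z T : Finset β), (g v₀ : β) = z ∧ ∀ u ∈ N, (g u : β) ∈ A := by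
  obtain ⟨e⟩ : Nonempty (N ≃ A) := Fintype.card_eq.mp (by simp [hNA])
  let f₀ : α → β := fun u => if h : u ∈ N then e ⟨u, h⟩ else z
  have hf₀N : ∀ u (h : u ∈ N), f₀ u = e ⟨u, h⟩ := fun u h => dif_pos h
  have hf₀v₀ : f₀ v₀ = z := dif_neg hv₀N
  have hzA : z ∉ A := fun h => hzT (hAT h)
  have hf₀A : ∀ u ∈ N, f₀ u ∈ A := fun u hu => hf₀N u hu ▸ (e _).2
  have hf₀_maps : (insert v₀ N).image f₀ ⊆ insert z T := by
    intro v hv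
    obtain ⟨u, hu, rfl⟩ := mem_image.mp hv
    rcases mem_insert.mp hu with rfl | hu
    · exact hf₀v₀ ▸ mem_insert_self _ _
    · exact mem_insert_of_mem (hAT (hf₀A u hu))
  have hf₀_inj : Set.InjOn f₀ (insert v₀ N : Finset α) := by
    intro u hu w hw h
    rw [coe_insert, Set.mem_insert_iff, mem_coe] at hu hw
    rcases hu with rfl | hu <;> rcases hw with rfl | hw
    · rfl
    · exact absurd (hf₀v₀ ▸ h ▸ hf₀A w hw) hzA
    · exact absurd (hf₀v₀ ▸ h.symm ▸ hf₀A u hu) hzA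
    · rw [hf₀N u hu, hf₀N w hw] at h
      exact congrArg Subtype.val (e.injective (Subtype.val_injective h))
  obtain ⟨g, hg⟩ := exists_equiv_extend_of_card_eq
    (by rw [card_insert_of_notMem hzT, hT]) hf₀_maps hf₀_inj
  exact ⟨g, (hg v₀ (mem_insert_self _ _)).trans hf₀v₀,
    fun u hu => hg u (mem_insert_of_mem hu) ▸ hf₀A u hu⟩

variable {s : Finset β} {c : β → γ} {m : ℕ}

theorem sum_sub_card_filter_le_one (hs : #s + 1 = m * m) (hfib : ∀ a, #{v ∈ s | c v = a} ≤ m)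
    (himg : #(s.image c) ≤ m) : ∑ a ∈ s.image c, (m - #{v ∈ s | c v = a}) ≤ 1 := by
  have hsum : ∑ a ∈ s.image c, (m - #{v ∈ s | c v = a}) + #s = #(s.image c) * m := by
    rw [card_eq_sum_card_image c s, ← sum_add_distrib,
      sum_congr rfl fun a _ => Nat.sub_add_cancel (hfib a), sum_const, smul_eq_mul]
  have := Nat.mul_le_mul_right m himg
  omega

theorem card_filter_add_one_eq (hs : #s + 1 = m * m) (hfib : ∀ a, #{v ∈ s | c v = a} ≤ m)
    (himg : #(s.image c) ≤ m) {a : γ} (ha : a ∈ s.image c) (hlt : #{v ∈ s | c v = a} < m) :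
    #{v ∈ s | c v = a} + 1 = m := by
  have := (single_le_sum (fun _ _ => Nat.zero_le _) ha).trans
    (sum_sub_card_filter_le_one hs hfib himg)
  omega

theorem eq_of_card_filter_lt (hs : #s + 1 = m * m) (hfib : ∀ a, #{v ∈ s | c v = a} ≤ m)
    (himg : #(s.image c) ≤ m) {a b : γ} (ha : a ∈ s.image c) (hb : b ∈ s.image c)
    (hfa : #{v ∈ s | c v = a} < m) (hfb : #{v ∈ s | c v = b} < m) : a = b := by
  by_contra hab
  have := (sum_le_sum_of_subset (f := fun a => m - #{v ∈ s | c v = a})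
    (insert_subset ha (singleton_subset_iff.mpr hb))).trans
    (sum_sub_card_filter_le_one hs hfib himg)
  rw [sum_pair hab] at this
  omega

end Finset

theorem Nat.sub_one_sq_eq (n : ℕ) : (n - 1) ^ 2 = (n - 2) * (n - 1) + (n - 1) := by
  rw [sq, ← Nat.succ_mul]
  rcases n with _ | _ | n <;> simp

theorem Function.Injective.card_le_of_forall_mem {α β : Type*} [Fintype α] {f : α → β}
    (hf : Function.Injective f) {T : Finset β} (hT : ∀ u, f u ∈ T) : Fintype.card α ≤ #T := by
  simpa using card_le_card_of_injOn (s := univ) f (fun u _ => hT u) hf.injOn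

namespace SimpleGraph

variable {α β : Type*} [Fintype α] {F : SimpleGraph α} {G : SimpleGraph β}

theorem exists_injective_hom_of_isClique {T : Finset β} (hT : G.IsClique (T : Set β))
    (hcard : Fintype.card α ≤ #T) : ∃ f : F →g G, Function.Injective f ∧ ∀ u, f u ∈ T := by
  obtain ⟨ι⟩ : Nonempty (α ↪ T) := Function.Embedding.nonempty_of_card_le (by simpa using hcard)
  have hι : Function.Injective (fun u => (ι u : β)) := Subtype.val_injective.comp ι.injective
  exact ⟨⟨fun u => ι u, fun huw => hT (ι _).2 (ι _).2 (hι.ne huw.ne)⟩, hι, fun u => (ι u).2⟩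

variable [DecidableRel F.Adj]

theorem exists_injective_hom_rooted [DecidableEq β] (v₀ : α) {z : β} {A T : Finset β}
    (hT : G.IsClique (T : Set β)) (hzT : z ∉ T) (hAT : A ⊆ T) (hzA : ∀ v ∈ A, G.Adj z v)
    (hA : F.degree v₀ ≤ #A) (hTcard : Fintype.card α ≤ #T + 1) :
    ∃ f : F →g G, Function.Injective f ∧ f v₀ = z ∧ ∀ u ≠ v₀, f u ∈ T := by
  classical
  have hdeg : #(F.neighborFinset v₀) < Fintype.card α := by
    rw [card_neighborFinset_eq_degree]; exact F.degree_lt_card_verts v₀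
  obtain ⟨A', hA'A, hA'⟩ := exists_subset_card_eq (s := A) (n := #(F.neighborFinset v₀))
    (by rwa [card_neighborFinset_eq_degree])
  obtain ⟨T', hA'T', hT'T, hT'⟩ := exists_subsuperset_card_eq (n := Fintype.card α - 1)
    (hA'A.trans hAT) (by omega) (by omega)
  obtain ⟨g, hgv₀, hgN⟩ := exists_equiv_insert (F.notMem_neighborFinset_self v₀)
    (fun h => hzT (hT'T h)) hA'T' hA'.symm (by omega)
  have hginj : Function.Injective (fun u => (g u : β)) := Subtype.val_injective.comp g.injective
  have hgT : ∀ u ≠ v₀, (g u : β) ∈ T := fun u hu => by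
    rcases mem_insert.mp (g u).2 with h | h
    · exact absurd (hginj (h.trans hgv₀.symm)) hu
    · exact hT'T h
  have hadj_root : ∀ w, F.Adj v₀ w → G.Adj (g v₀) (g w) := fun w hw => by
    rw [hgv₀]; exact hzA _ (hA'A (hgN w ((F.mem_neighborFinset _ _).mpr hw)))
  refine ⟨⟨fun u => g u, fun {u w} huw => ?_⟩, hginj, hgv₀, hgT⟩
  by_cases hu : u = v₀
  · subst hu; exact hadj_root w huw
  by_cases hw : w = v₀
  · subst hw; exact (hadj_root u huw.symm).symm
  exact hT (hgT u hu) (hgT w hw) (hginj.ne huw.ne)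

theorem Hom.apply_ne_of_card_lt_degree {f : F →g G} (hf : Function.Injective f) {Z T : Finset β}
    {z : β} (hfZ : ∀ u, f u ∈ Z) (hzT : ∀ w ∈ Z, G.Adj z w → w ∈ T) {u : α}
    (hu : #T < F.degree u) : f u ≠ z := by
  intro hfu
  have : F.degree u ≤ #T := by
    rw [← card_neighborFinset_eq_degree]
    exact card_le_card_of_injOn f (fun w hw => hzT _ (hfZ w)
      (hfu ▸ f.map_adj ((F.mem_neighborFinset _ _).mp hw))) hf.injOn
  omega

theorem Hom.exists_apply_notMem_union [DecidableEq β] {f : F →g G}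
    (hf : Function.Injective f) {O B T : Finset β}
    (hOT : ∀ z ∈ O, ∀ w ∈ O ∪ B, G.Adj z w → w ∈ T) (hT : ∀ u, #T < F.degree u)
    (hB : #B < Fintype.card α) : ∃ u, f u ∉ O ∪ B := by
  by_contra! hfOB
  have hfB : ∀ u, f u ∈ B := fun u => by
    have hfO : f u ∉ O := fun hz =>
      Hom.apply_ne_of_card_lt_degree hf hfOB (hOT _ hz) (hT u) rfl
    simpa [hfO] using hfOB u
  exact (hf.card_le_of_forall_mem hfB).not_gt hB

end SimpleGraph

open SimpleGraph

namespace IsFWORM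

variable {α β : Type*} [Fintype α] {F : SimpleGraph α} {G : SimpleGraph β} {c : β → ℕ}
  {T : Finset β}

theorem of_forall_lt {k : ℕ} (hc : ∀ v, c v < k) (hk : k < Fintype.card α)
    (hmono : ∀ f : F →g G, Function.Injective f → ∀ a, ∃ u, c (f u) ≠ a) : IsFWORM F G c := by
  refine fun f hf => ⟨?_, ?_⟩
  · obtain ⟨u₀⟩ : Nonempty α := Fintype.card_pos_iff.mp (by omega)
    obtain ⟨u, hu⟩ := hmono f hf (c (f u₀))
    exact ⟨u, u₀, hu⟩
  · obtain ⟨u, -, w, -, hne, heq⟩ := exists_ne_map_eq_of_card_lt_of_maps_to (s := univ)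
      (t := range k) (f := fun u => c (f u)) (by rwa [card_range, card_univ])
      fun u _ => mem_range.mpr (hc _)
    exact ⟨u, w, hne, heq⟩

theorem card_filter_lt (hc : IsFWORM F G c) (hT : G.IsClique (T : Set β)) (a : ℕ) :
    #{v ∈ T | c v = a} < Fintype.card α := by
  by_contra! h
  obtain ⟨f, hf, hfT⟩ := exists_injective_hom_of_isClique (F := F)
    (hT.subset (coe_subset.mpr (filter_subset _ T))) h
  obtain ⟨⟨u, w, hne⟩, -⟩ := hc f hf
  exact hne ((mem_filter.mp (hfT u)).2.trans (mem_filter.mp (hfT w)).2.symm)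

theorem card_image_lt (hc : IsFWORM F G c) (hT : G.IsClique (T : Set β)) :
    #(T.image c) < Fintype.card α := by
  by_contra! h
  obtain ⟨R, hRT, hR, hRimg⟩ := T.exists_subset_injOn_image_eq c
  obtain ⟨f, hf, hfR⟩ := exists_injective_hom_of_isClique (F := F)
    (hT.subset (coe_subset.mpr hRT)) (by rwa [← card_image_of_injOn hR, hRimg])
  obtain ⟨-, u, w, hne, heq⟩ := hc f hf
  exact hne (hf (hR (hfR u) (hfR w) heq))

variable [DecidableRel F.Adj] [DecidableEq β] {z : β}

theorem apply_mem_image_of_forall_adj [Nonempty α] (hc : IsFWORM F G c)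
    (hT : G.IsClique (T : Set β)) (hzT : ∀ v ∈ T, G.Adj z v)
    (hcard : (Fintype.card α - 2) * (Fintype.card α - 1) < #T) : c z ∈ T.image c := by
  let v₀ : α := Classical.arbitrary α
  have himg : Fintype.card α - 2 < #(T.image c) := by
    refine Nat.lt_of_mul_lt_mul_left (a := Fintype.card α - 1) ?_
    rw [mul_comm]
    refine hcard.trans_le (card_le_mul_card_image T _ fun a _ => ?_)
    have := hc.card_filter_lt hT a
    omega
  obtain ⟨R, hRT, hR, hRimg⟩ := T.exists_subset_injOn_image_eq c
  have hRcard : #R = #(T.image c) := by rw [← hRimg, card_image_of_injOn hR]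
  obtain ⟨f, hf, hfv₀, hfR⟩ := exists_injective_hom_rooted (F := F) v₀
    (hT.subset (coe_subset.mpr hRT)) (fun h => G.loopless.irrefl z (hzT z (hRT h))) subset_rfl
    (fun v hv => hzT v (hRT hv)) (by have := F.degree_lt_card_verts v₀; omega) (by omega)
  have hroot : ∀ u w, u ≠ w → c (f u) = c (f w) → u = v₀ → c z ∈ T.image c := by
    rintro u w hne heq rfl
    rw [hfv₀] at heq
    exact heq ▸ mem_image_of_mem c (hRT (hfR w hne.symm))
  obtain ⟨-, u, w, hne, heq⟩ := hc f hf
  by_cases hu : u = v₀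
  · exact hroot u w hne heq hu
  by_cases hw : w = v₀
  · exact hroot w u hne.symm heq.symm hw
  exact absurd (hf (hR (hfR u hu) (hfR w hw) heq)) hne

theorem card_add_one_lt_of_forall_eq (hc : IsFWORM F G c) (v₀ : α) {A : Finset β}
    (hT : G.IsClique (T : Set β)) (hzT : z ∉ T) (hTc : ∀ v ∈ T, c v = c z) (hAT : A ⊆ T)
    (hzA : ∀ v ∈ A, G.Adj z v) (hA : F.degree v₀ ≤ #A) : #T + 1 < Fintype.card α := by
  by_contra! h
  obtain ⟨f, hf, hfv₀, hfT⟩ := exists_injective_hom_rooted v₀ hT hzT hAT hzA hA h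
  have hfc : ∀ u, c (f u) = c z := fun u => by
    by_cases hu : u = v₀
    · rw [hu, hfv₀]
    · exact hTc _ (hfT u hu)
  obtain ⟨⟨u, w, hne⟩, -⟩ := hc f hf
  exact hne ((hfc u).trans (hfc w).symm)

theorem card_filter_add_one_lt (hc : IsFWORM F G c) (v₀ : α) {s s' : Finset β}
    (hI : G.IsClique (↑(s ∪ s') : Set β)) (hzI : z ∉ s ∪ s') (hzs : ∀ v ∈ s, G.Adj z v)
    (hs' : #s' + F.degree v₀ + 1 ≤ Fintype.card α) :
    #{v ∈ s ∪ s' | c v = c z} + 1 < Fintype.card α := by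
  by_contra! h
  have hsplit : #{v ∈ s ∪ s' | c v = c z} ≤ #{v ∈ s | c v = c z} + #s' := by
    rw [filter_union]
    exact (card_union_le _ _).trans (Nat.add_le_add_left (card_filter_le _ _) _)
  refine (hc.card_add_one_lt_of_forall_eq v₀ (hI.subset (coe_subset.mpr (filter_subset _ _)))
    (fun h => hzI (mem_filter.mp h).1) (fun v hv => (mem_filter.mp hv).2)
    (filter_subset_filter _ subset_union_left) (fun v hv => hzs v (mem_filter.mp hv).1)
    (by omega)).not_ge h

theorem eq_and_card_filter_of_gadget (hc : IsFWORM F G c) (v₀ : α) {s s' : Finset β} {x y : β}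
    (hI : G.IsClique (↑(s ∪ s') : Set β)) (hss' : Disjoint s s') (hx : x ∉ s ∪ s')
    (hy : y ∉ s ∪ s') (hxs : ∀ v ∈ s, G.Adj x v) (hys : ∀ v ∈ s, G.Adj y v)
    (hδ : 2 ≤ F.degree v₀) (hs' : #s' + F.degree v₀ + 1 = Fintype.card α)
    (hIcard : #(s ∪ s') + 1 = (Fintype.card α - 1) ^ 2) :
    c x = c y ∧ #{v ∈ s ∪ s' | c v = c x} = Fintype.card α - 2 := by
  have : Nonempty α := ⟨v₀⟩
  have hsq := Nat.sub_one_sq_eq (Fintype.card α)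
  have hs := card_union_of_disjoint hss'
  have hsI : #(s ∪ s') + 1 = (Fintype.card α - 1) * (Fintype.card α - 1) := by rw [← sq]; omega
  have hfib : ∀ a, #{v ∈ s ∪ s' | c v = a} ≤ Fintype.card α - 1 := fun a => by
    have := hc.card_filter_lt hI a; omega
  have himg : #((s ∪ s').image c) ≤ Fintype.card α - 1 := by
    have := hc.card_image_lt hI; omega
  have hdeficient : ∀ z ∉ s ∪ s', (∀ v ∈ s, G.Adj z v) →
      c z ∈ (s ∪ s').image c ∧ #{v ∈ s ∪ s' | c v = c z} < Fintype.card α - 1 := by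
    intro z hzI hzs
    refine ⟨image_subset_image subset_union_left (hc.apply_mem_image_of_forall_adj
      (hI.subset (coe_subset.mpr subset_union_left)) hzs (by omega)), ?_⟩
    have := hc.card_filter_add_one_lt v₀ hI hzI hzs (by omega)
    omega
  obtain ⟨hxI, hxlt⟩ := hdeficient x hx hxs
  obtain ⟨hyI, hylt⟩ := hdeficient y hy hys
  have := card_filter_add_one_eq hsI hfib himg hxI hxlt
  exact ⟨eq_of_card_filter_lt hsI hfib himg hxI hyI hxlt hylt, by omega⟩

theorem ite {K O B T : Finset β} {g : β → ℕ} (hg_lt : ∀ v ∈ K, g v + 2 < Fintype.card α)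
    (hg_fib : ∀ j, #{v ∈ K | g v = j} < Fintype.card α) (hK : ∀ v ∉ K, v ∈ O ∪ B)
    (hOT : ∀ z ∈ O, ∀ w ∈ O ∪ B, G.Adj z w → w ∈ T) (hT : ∀ u, #T < F.degree u)
    (hB : #B < Fintype.card α) : IsFWORM F G (fun v => if v ∈ K then g v + 1 else 0) := by
  obtain ⟨u₀⟩ : Nonempty α := Fintype.card_pos_iff.mp (by omega)
  have := hT u₀
  have := F.degree_lt_card_verts u₀
  refine of_forall_lt (k := Fintype.card α - 1) (fun v => ?_) (by omega) fun f hf a => ?_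
  · by_cases hv : v ∈ K
    · have := hg_lt v hv; simp only [if_pos hv]; omega
    · simp only [if_neg hv]; omega
  by_contra! hmono
  rcases Nat.eq_zero_or_pos a with rfl | ha
  · obtain ⟨u, hu⟩ := Hom.exists_apply_notMem_union hf hOT hT hB
    exact hu (hK _ fun hfu => by simpa [hfu] using hmono u)
  · have hfK : ∀ u, f u ∈ {v ∈ K | g v = a - 1} := fun u => by
      have h := hmono u
      by_cases hu : f u ∈ K
      · simp only [if_pos hu] at h
        exact mem_filter.mpr ⟨hu, by omega⟩
      · simp only [if_neg hu] at h; omega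
    exact (hf.card_le_of_forall_mem hfK).not_gt (hg_fib (a - 1))

end IsFWORM

theorem FWORMColorable.of_gadget {α β : Type*} [Fintype α] [DecidableEq β] {F : SimpleGraph α}
    [DecidableRel F.Adj] {G : SimpleGraph β} {δ : ℕ} (hδ : 0 < δ) (hδF : ∀ v, δ ≤ F.degree v)
    {s s' : Finset β} {x y : β} (hx : x ∉ s ∪ s') (hy : y ∉ s ∪ s') (hss' : Disjoint s s')
    (hall : ∀ v, v = x ∨ v = y ∨ v ∈ s ∪ s')
    (hxs : ∀ v, G.Adj x v → v ∈ s) (hys : ∀ v, G.Adj y v → v ∈ s)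
    (hs' : #s' + δ + 1 = Fintype.card α) (hI : #(s ∪ s') + 1 = (Fintype.card α - 1) ^ 2) :
    FWORMColorable F G := by
  set n := Fintype.card α
  have hsq := Nat.sub_one_sq_eq n
  have hs : #s + #s' = #(s ∪ s') := (card_union_of_disjoint hss').symm
  obtain ⟨T₀, hT₀s, hT₀⟩ := exists_subset_card_eq (s := s) (n := δ - 1) (by omega)
  set B := s' ∪ T₀
  have hB : #B = n - 2 := by
    rw [card_union_of_disjoint (hss'.symm.mono_right hT₀s)]; omega
  have hBI : B ⊆ s ∪ s' := union_subset subset_union_right (hT₀s.trans subset_union_left)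
  obtain ⟨g, hg_lt, hg_fib⟩ := exists_card_filter_le ((s ∪ s') \ B) (k := n - 2) (m := n - 1)
    (by rw [card_sdiff_of_subset hBI]; omega)
  have hK : ∀ v ∉ (s ∪ s') \ B, v ∈ {x, y} ∪ B := fun v hv => by
    rcases hall v with rfl | rfl | h
    · simp
    · simp
    · exact mem_union_right _ (by by_contra hB; exact hv (mem_sdiff.mpr ⟨h, hB⟩))
  have hT₀ : ∀ z ∈ ({x, y} : Finset β), ∀ w ∈ {x, y} ∪ B, G.Adj z w → w ∈ T₀ := by
    intro z hz w hw hzw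
    have hws : w ∈ s := by
      simp only [mem_insert, mem_singleton] at hz
      rcases hz with rfl | rfl
      exacts [hxs w hzw, hys w hzw]
    simp only [B, mem_union, mem_insert, mem_singleton] at hw
    rcases hw with (rfl | rfl) | hw | hw
    · exact absurd (mem_union_left _ hws) hx
    · exact absurd (mem_union_left _ hws) hy
    · exact absurd hw (disjoint_left.mp hss' hws)
    · exact hw
  exact ⟨_, IsFWORM.ite (g := g) (fun v hv => by have := hg_lt v hv; omega)
    (fun j => by have := hg_fib j; omega) hK hT₀ (fun u => by have := hδF u; omega) (by omega)⟩

theorem stmt8_general {α V : Type} [Fintype α] [Fintype V]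
    (F : SimpleGraph α) [DecidableRel F.Adj] (n δ : ℕ)
    (hcard : Fintype.card α = n)
    (hδ2 : 2 ≤ δ) (hδlb : ∀ v : α, δ ≤ F.degree v) (hδmin : ∃ v : α, F.degree v = δ)
    (S S' : Set V) (x y : V)
    (hx : x ∉ S ∪ S') (hy : y ∉ S ∪ S') (hSS' : Disjoint S S')
    (hS' : S'.ncard = n - δ - 1) (hSU : (S ∪ S').ncard = (n - 1) ^ 2 - 1)
    (hall : ∀ v : V, v ∈ S ∪ S' ∪ {x, y})
    (H : SimpleGraph V)
    (hAdj : ∀ u v : V, H.Adj u v ↔ u ≠ v ∧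
      ((u ∈ S ∪ S' ∧ v ∈ S ∪ S') ∨
       (u ∈ ({x, y} : Set V) ∧ v ∈ S) ∨ (v ∈ ({x, y} : Set V) ∧ u ∈ S))) :
    FWORMColorable F H ∧
      ∀ c : V → ℕ, IsFWORM F H c →
        c x = c y ∧ {v ∈ S ∪ S' | c v = c x}.ncard = n - 2 := by
  classical
  subst hcard
  obtain ⟨v₀, rfl⟩ := hδmin
  obtain ⟨s, rfl⟩ := S.toFinite.exists_finset_coe
  obtain ⟨s', rfl⟩ := S'.toFinite.exists_finset_coe
  simp only [← coe_union, Set.ncard_coe_finset, mem_coe, disjoint_coe] at hS' hSU hx hy hSS' hAdj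
  have hδn := F.degree_lt_card_verts v₀
  have hsq_pos : 0 < (Fintype.card α - 1) ^ 2 := pow_pos (by omega) 2
  have hI : H.IsClique (↑(s ∪ s') : Set V) := fun u hu v hv huv =>
    (hAdj u v).mpr ⟨huv, .inl ⟨hu, hv⟩⟩
  have houter : ∀ z ∉ s ∪ s', z ∈ ({x, y} : Set V) → ∀ v, H.Adj z v ↔ v ∈ s := by
    intro z hzI hz v
    refine (hAdj z v).trans ⟨?_, fun hv => ⟨fun h => hzI (h ▸ mem_union_left _ hv),
      .inr (.inl ⟨hz, hv⟩)⟩⟩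
    rintro ⟨-, ⟨hzI', -⟩ | ⟨-, hv⟩ | ⟨-, hzs⟩⟩
    exacts [absurd hzI' hzI, hv, absurd (mem_union_left _ hzs) hzI]
  have hxs := houter x hx (by simp)
  have hys := houter y hy (by simp)
  refine ⟨FWORMColorable.of_gadget (by omega) hδlb hx hy hSS' (fun v => by simpa using hall v)
    (fun v => (hxs v).mp) (fun v => (hys v).mp) (by omega) (by omega), fun c hc => ?_⟩
  obtain ⟨hcxy, hclass⟩ := hc.eq_and_card_filter_of_gadget v₀ hI hSS' hx hy
    (fun v => (hxs v).mpr) (fun v => (hys v).mpr) hδ2 (by omega) (by omega)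
  refine ⟨hcxy, ?_⟩
  rw [show {v ∈ (↑s ∪ ↑s' : Set V) | c v = c x} = ↑({v ∈ s ∪ s' | c v = c x} : Finset V) by
    ext; simp, Set.ncard_coe_finset, hclass]

/-- The gadget `G₁(F)`: `F` has order `n` and minimum degree `δ ≥ 2`; the host
graph `H` has vertex set `S ∪ S' ∪ {x,y}` with `|S'| = n - δ - 1`,
`|S ∪ S'| = (n-1)^2 - 1`, `S ∪ S'` inducing a complete graph, and `x, y`
nonadjacent outer vertices each adjacent exactly to the vertices of `S`.
Then `H` is `F`-WORM colorable, and in every `F`-WORM coloring of `H` the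
vertices `x` and `y` receive the same color, which appears on exactly `n-2`
inner vertices. -/
theorem stmt8 {α V : Type} [Fintype α] [Fintype V]
    (F : SimpleGraph α) [DecidableRel F.Adj] (n δ : ℕ)
    (hcard : Fintype.card α = n)
    (hδ2 : 2 ≤ δ) (hδlb : ∀ v : α, δ ≤ F.degree v) (hδmin : ∃ v : α, F.degree v = δ)
    (S S' : Set V) (x y : V)
    (hxy : x ≠ y) (hx : x ∉ S ∪ S') (hy : y ∉ S ∪ S') (hSS' : Disjoint S S')
    (hS' : S'.ncard = n - δ - 1) (hSU : (S ∪ S').ncard = (n - 1) ^ 2 - 1)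
    (hall : ∀ v : V, v ∈ S ∪ S' ∪ {x, y})
    (H : SimpleGraph V)
    (hAdj : ∀ u v : V, H.Adj u v ↔ u ≠ v ∧
      ((u ∈ S ∪ S' ∧ v ∈ S ∪ S') ∨
       (u ∈ ({x, y} : Set V) ∧ v ∈ S) ∨ (v ∈ ({x, y} : Set V) ∧ u ∈ S))) :
    FWORMColorable F H ∧
      ∀ c : V → ℕ, IsFWORM F H c →
        c x = c y ∧ {v ∈ S ∪ S' | c v = c x}.ncard = n - 2 :=
  stmt8_general F n δ hcard hδ2 hδlb hδmin S S' x y hx hy hSS' hS' hSU hall H hAdj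
end

section
/- Let n ≥ 3 and let F be the gadget G_1(K_n), i.e., the graph obtained from a complete graph on a set S of (n-1)^2 - 1 vertices by adding two nonadjacent vertices x and y, each adjacent to all of S. Then in every K_n-WORM coloring of this graph, x and y receive the same color. -/
open SimpleGraph

lemma fibers_eq {V : Type} [DecidableEq V] (H : SimpleGraph V) (n : ℕ) (hn : 3 ≤ n)
    (c : V → ℕ) (hw : IsKnWORM H n c) (A : Finset V)
    (hA : ∀ u ∈ A, ∀ v ∈ A, u ≠ v → H.Adj u v)
    (hcard : A.card = (n - 1) ^ 2) :
    ∀ k ∈ A.image c, (A.filter (fun v => c v = k)).card = n - 1 := by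
  classical
  set m := n - 1 with hm
  have hm2 : 2 ≤ m := by omega
  -- monochromatic fibers have size at most m
  have hfib : ∀ k, (A.filter (fun v => c v = k)).card ≤ m := by
    intro k
    by_contra h
    push_neg at h
    obtain ⟨T, hTsub, hTcard⟩ :=
      Finset.exists_subset_card_eq (show n ≤ (A.filter (fun v => c v = k)).card by omega)
    have hTA : T ⊆ A := hTsub.trans (Finset.filter_subset _ _)
    have hcl : H.IsNClique n T :=
      ⟨fun u hu v hv huv => hA u (hTA hu) v (hTA hv) huv, hTcard⟩
    obtain ⟨⟨u, hu, v, hv, hne⟩, -⟩ := hw T hcl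
    exact hne ((Finset.mem_filter.mp (hTsub hu)).2.trans
      ((Finset.mem_filter.mp (hTsub hv)).2).symm)
  have hApos : 0 < A.card := by
    rw [hcard]; exact pow_pos (by omega) 2
  obtain ⟨a0, ha0⟩ := Finset.card_pos.mp hApos
  -- at most m colors appear on A
  have hcol : (A.image c).card ≤ m := by
    by_contra h
    push_neg at h
    obtain ⟨C', hCsub, hCcard⟩ :=
      Finset.exists_subset_card_eq (show n ≤ (A.image c).card by omega)
    set g : ℕ → V := fun k => if h : ∃ v ∈ A, c v = k then h.choose else a0 with hg
    have hgmem : ∀ k ∈ C', g k ∈ A ∧ c (g k) = k := by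
      intro k hk
      obtain ⟨v, hv, hcv⟩ := Finset.mem_image.mp (hCsub hk)
      have hex : ∃ v ∈ A, c v = k := ⟨v, hv, hcv⟩
      simp only [hg, dif_pos hex]
      exact ⟨hex.choose_spec.1, hex.choose_spec.2⟩
    set T := C'.image g with hT
    have hTA : T ⊆ A := by
      intro v hv
      obtain ⟨k, hk, rfl⟩ := Finset.mem_image.mp hv
      exact (hgmem k hk).1
    have hinj : Set.InjOn g C' := by
      intro k₁ h₁ k₂ h₂ he
      rw [← (hgmem k₁ h₁).2, ← (hgmem k₂ h₂).2, he]
    have hTcard : T.card = n := by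
      rw [hT, Finset.card_image_of_injOn hinj, hCcard]
    have hcl : H.IsNClique n T :=
      ⟨fun u hu v hv huv => hA u (hTA hu) v (hTA hv) huv, hTcard⟩
    obtain ⟨-, u, hu, v, hv, hne, hcv⟩ := hw T hcl
    obtain ⟨k₁, hk₁, rfl⟩ := Finset.mem_image.mp hu
    obtain ⟨k₂, hk₂, rfl⟩ := Finset.mem_image.mp hv
    have hk : k₁ = k₂ := by rw [← (hgmem k₁ hk₁).2, ← (hgmem k₂ hk₂).2, hcv]
    exact hne (by rw [hk])
  have hsum : A.card = ∑ k ∈ A.image c, (A.filter (fun v => c v = k)).card :=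
    Finset.card_eq_sum_card_fiberwise (fun v hv => Finset.mem_image_of_mem c hv)
  intro k hk
  have h1 := hfib k
  have hsplit : ∑ k' ∈ (A.image c).erase k, (A.filter (fun v => c v = k')).card
      + (A.filter (fun v => c v = k)).card = m ^ 2 := by
    rw [Finset.sum_erase_add _ _ hk, ← hsum, hcard]
  have h2 : ∑ k' ∈ (A.image c).erase k, (A.filter (fun v => c v = k')).card
      ≤ (m - 1) * m := by
    calc ∑ k' ∈ (A.image c).erase k, (A.filter (fun v => c v = k')).card
        ≤ ((A.image c).erase k).card • m :=
          Finset.sum_le_card_nsmul _ _ m (fun k' _ => hfib k')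
      _ = ((A.image c).erase k).card * m := by rw [smul_eq_mul]
      _ ≤ (m - 1) * m := by
          apply Nat.mul_le_mul_right
          rw [Finset.card_erase_of_mem hk]
          omega
  have hmm : (m - 1) * m + m = m ^ 2 := by
    have h : m - 1 + 1 = m := by omega
    calc (m - 1) * m + m = ((m - 1) + 1) * m := by ring
      _ = m * m := by rw [h]
      _ = m ^ 2 := (sq m).symm
  have : m ≤ (A.filter (fun v => c v = k)).card := by linarith
  omega

/-- The gadget `G₁(K_n)`: a complete graph on a set `S` of `(n-1)^2 - 1`
vertices together with two nonadjacent vertices `x` and `y`, each adjacent to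
all of `S`. In every `K_n`-WORM coloring of this graph, `x` and `y` receive the
same color. -/
theorem stmt9 {V : Type} [Fintype V] (n : ℕ) (hn : 3 ≤ n)
    (S : Set V) (x y : V) (hxy : x ≠ y) (hx : x ∉ S) (hy : y ∉ S)
    (hS : S.ncard = (n - 1) ^ 2 - 1)
    (hall : ∀ v : V, v ∈ S ∪ {x, y})
    (H : SimpleGraph V)
    (hAdj : ∀ u v : V, H.Adj u v ↔ u ≠ v ∧
      ((u ∈ S ∧ v ∈ S) ∨
       (u ∈ ({x, y} : Set V) ∧ v ∈ S) ∨ (v ∈ ({x, y} : Set V) ∧ u ∈ S))) :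
    ∀ c : V → ℕ, IsKnWORM H n c → c x = c y := by
  classical
  intro c hw
  set m := n - 1 with hm
  have hm2 : 2 ≤ m := by omega
  have hm4 : 4 ≤ m ^ 2 := by nlinarith
  have hSfin : S.Finite := Set.toFinite S
  set Sf := hSfin.toFinset with hSf
  have hmemSf : ∀ v : V, v ∈ Sf ↔ v ∈ S := fun v => hSfin.mem_toFinset
  have hScard : Sf.card = m ^ 2 - 1 := by
    rw [hSf, ← Set.ncard_eq_toFinset_card _ hSfin, hS]
  have hxS : x ∉ Sf := fun h => hx ((hmemSf x).mp h)
  have hyS : y ∉ Sf := fun h => hy ((hmemSf y).mp h)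
  have hclique : ∀ z : V, z ∈ ({x, y} : Set V) →
      ∀ u ∈ insert z Sf, ∀ v ∈ insert z Sf, u ≠ v → H.Adj u v := by
    intro z hz u hu v hv huv
    rw [hAdj]
    refine ⟨huv, ?_⟩
    rcases Finset.mem_insert.mp hu with h1 | h1
    · rcases Finset.mem_insert.mp hv with h2 | h2
      · exact absurd (h1.trans h2.symm) huv
      · exact Or.inr (Or.inl ⟨h1 ▸ hz, (hmemSf v).mp h2⟩)
    · rcases Finset.mem_insert.mp hv with h2 | h2
      · exact Or.inr (Or.inr ⟨h2 ▸ hz, (hmemSf u).mp h1⟩)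
      · exact Or.inl ⟨(hmemSf u).mp h1, (hmemSf v).mp h2⟩
  have hcardA : (insert x Sf).card = (n - 1) ^ 2 := by
    rw [Finset.card_insert_of_notMem hxS, hScard, ← hm]; omega
  have hcardB : (insert y Sf).card = (n - 1) ^ 2 := by
    rw [Finset.card_insert_of_notMem hyS, hScard, ← hm]; omega
  have hA := fibers_eq H n hn c hw (insert x Sf)
    (hclique x (by simp)) hcardA
  have hB := fibers_eq H n hn c hw (insert y Sf)
    (hclique y (by simp)) hcardB
  -- fiber of c x inside Sf has size m - 1
  have hSfib : ∀ z : V, z ∉ Sf →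
      ((insert z Sf).filter (fun v => c v = c z)).card = m →
      (Sf.filter (fun v => c v = c z)).card = m - 1 := by
    intro z hz hcz
    have hznot : z ∉ Sf.filter (fun v => c v = c z) :=
      fun h => hz (Finset.mem_filter.mp h).1
    rw [Finset.filter_insert, if_pos rfl,
      Finset.card_insert_of_notMem hznot] at hcz
    omega
  have hSx : (Sf.filter (fun v => c v = c x)).card = m - 1 :=
    hSfib x hxS (hA (c x) (Finset.mem_image_of_mem c (Finset.mem_insert_self x Sf)))
  have hSy : (Sf.filter (fun v => c v = c y)).card = m - 1 :=
    hSfib y hyS (hB (c y) (Finset.mem_image_of_mem c (Finset.mem_insert_self y Sf)))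
  by_contra hne
  have hpos : (Sf.filter (fun v => c v = c y)).Nonempty :=
    Finset.card_pos.mp (by omega)
  obtain ⟨v, hv⟩ := hpos
  have hv' := Finset.mem_filter.mp hv
  have hcyim : c y ∈ (insert x Sf).image c :=
    Finset.mem_image.mpr ⟨v, Finset.mem_insert_of_mem hv'.1, hv'.2⟩
  have hcyA : ((insert x Sf).filter (fun v => c v = c y)).card = m := hA _ hcyim
  rw [Finset.filter_insert, if_neg hne] at hcyA
  omega
end

section
/- For every n ≥ 3 and every ℓ ≥ 1 there exists a K_n-WORM colorable graph G* whose K_n-WORM feasible set equals {n-1} ∪ {k+n-3, ..., N+n-3} for some integers k ≥ ℓ+3 and N ≥ k; in particular the feasible set of G* has a gap of size at least ℓ. -/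
/-!
Write `n = p + 3`. If `G` is triangle-free without isolated vertices, every clique of
`G* = (G ⊠ K_{p+2}) ∨ K_{p(p+2)}` lies in a block: the two fibers over an edge `uv` of `G`
together with the hub `K_{p(p+2)}`, a clique on `(p+2)²` vertices. So a coloring is `K_n`-WORM
iff every color meets every block in `0` or `p + 2` vertices, and then each block sees exactly
`p + 2` colors. Fix a color: its multiplicities on the fibers sum to a constant along the edges
of `G`, or, if the hub misses it, to `0` or `p + 2`. On a connected non-bipartite `G` this
forces the multiplicity to be constant or `{0, p + 2}`-valued. Hence either every fiber is
monochromatic, the fiber colors form a proper coloring of `G` and the hub uses `p` further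
colors, or all fibers carry the same colors and only the `p + 2` colors of one block occur.
Both kinds are realized, proper colorings of `G` realize every number of colors from `χ(G)`
to `|V(G)|`, and iterated Mycielskians of `K₂` are connected, triangle-free graphs with
`χ(G) ≥ ℓ + 3`.
-/

open SimpleGraph

open Finset

section Balanced

variable {α : Type*} {c : α → ℕ} {B : Finset α} {m : ℕ}

def IsBalancedOn (c : α → ℕ) (B : Finset α) (m : ℕ) : Prop :=
  ∀ x, #{w ∈ B | c w = x} = 0 ∨ #{w ∈ B | c w = x} = m

theorem IsBalancedOn.card_image (h : IsBalancedOn c B m) (hB : #B = m * m) (hm : 0 < m) :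
    #(B.image c) = m := by
  have hsum : ∑ x ∈ B.image c, #{w ∈ B | c w = x} = #(B.image c) * m := by
    rw [← smul_eq_mul, ← sum_const]
    refine sum_congr rfl fun x hx => (h x).resolve_left fun h0 => ?_
    obtain ⟨w, hw, rfl⟩ := mem_image.1 hx
    exact (card_pos.2 ⟨w, mem_filter.2 ⟨hw, rfl⟩⟩ : 0 < #{u ∈ B | c u = c w}).ne' h0
  rw [← card_eq_sum_card_image, hB] at hsum
  exact (Nat.eq_of_mul_eq_mul_right hm hsum).symm

theorem IsBalancedOn.of_forall_subset (hB : #B = m * m)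
    (hmono : ∀ s ⊆ B, #s = m + 1 → ∃ u ∈ s, ∃ v ∈ s, c u ≠ c v)
    (hrainbow : ∀ s ⊆ B, #s = m + 1 → ∃ u ∈ s, ∃ v ∈ s, u ≠ v ∧ c u = c v) :
    IsBalancedOn c B m := by
  have hclass : ∀ x, #{w ∈ B | c w = x} ≤ m := by
    intro x
    by_contra! hx
    obtain ⟨s, hs, hcard⟩ := exists_subset_card_eq (Nat.succ_le_of_lt hx)
    obtain ⟨u, hu, v, hv, hne⟩ := hmono s (hs.trans (filter_subset _ _)) hcard
    exact hne ((mem_filter.1 (hs hu)).2.trans (mem_filter.1 (hs hv)).2.symm)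
  have himage : #(B.image c) ≤ m := by
    by_contra! hx
    obtain ⟨t, htB, hinj, himg⟩ :=
      exists_subset_injOn_image_eq_of_surjOn (↑B) (B.image c) (by simpa using Set.surjOn_image c ↑B)
    rw [← himg, card_image_of_injOn hinj] at hx
    obtain ⟨s, hs, hcard⟩ := exists_subset_card_eq (Nat.succ_le_of_lt hx)
    obtain ⟨u, hu, v, hv, hne, heq⟩ := hrainbow s ((coe_subset.1 htB).trans' hs) hcard
    exact hne (hinj (hs hu) (hs hv) heq)
  intro x
  by_cases hx : x ∈ B.image c
  · -- `#B` is the sum of at most `m` class sizes, each at most `m`, so all of them equal `m`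
    right
    by_contra hne
    have hlt := sum_lt_sum (fun y _ => hclass y) ⟨x, hx, lt_of_le_of_ne (hclass x) hne⟩
    rw [← card_eq_sum_card_image, sum_const, smul_eq_mul] at hlt
    nlinarith
  · left
    rw [card_eq_zero, filter_eq_empty_iff]
    exact fun w hw hcw => hx (mem_image.2 ⟨w, hw, hcw⟩)

theorem IsBalancedOn.forall_subset (h : IsBalancedOn c B m) (hB : #B = m * m) (hm : 0 < m)
    {s : Finset α} (hs : s ⊆ B) (hcard : #s = m + 1) :
    (∃ u ∈ s, ∃ v ∈ s, c u ≠ c v) ∧ (∃ u ∈ s, ∃ v ∈ s, u ≠ v ∧ c u = c v) := by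
  refine ⟨?_, exists_ne_map_eq_of_card_lt_of_maps_to (t := B.image c) ?_ ?_⟩
  · by_contra! hmono
    obtain ⟨w, hw⟩ := card_pos.1 (by omega : 0 < #s)
    have hsub : s ⊆ {u ∈ B | c u = c w} := fun u hu => mem_filter.2 ⟨hs hu, hmono u hu w hw⟩
    have := card_le_card hsub
    rcases h (c w) with h0 | h0 <;> omega
  · rw [h.card_image hB hm, hcard]
    exact Nat.lt_succ_self m
  · exact fun u hu => mem_image_of_mem c (hs hu)

theorem isBalancedOn_iff_forall_subset (hB : #B = m * m) (hm : 0 < m) :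
    IsBalancedOn c B m ↔ ∀ s ⊆ B, #s = m + 1 →
      (∃ u ∈ s, ∃ v ∈ s, c u ≠ c v) ∧ (∃ u ∈ s, ∃ v ∈ s, u ≠ v ∧ c u = c v) :=
  ⟨fun h _ hs hcard => h.forall_subset hB hm hs hcard, fun h =>
    .of_forall_subset hB (fun s hs hcard => (h s hs hcard).1) fun s hs hcard => (h s hs hcard).2⟩

end Balanced

namespace SimpleGraph

section Operations

variable {α β : Type*}

def strongProd (G : SimpleGraph α) (H : SimpleGraph β) : SimpleGraph (α × β) where
  Adj x y := x ≠ y ∧ (x.1 = y.1 ∨ G.Adj x.1 y.1) ∧ (x.2 = y.2 ∨ H.Adj x.2 y.2)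
  symm := ⟨fun _ _ ⟨hne, h₁, h₂⟩ => ⟨hne.symm, h₁.imp Eq.symm Adj.symm, h₂.imp Eq.symm Adj.symm⟩⟩
  loopless := ⟨fun _ h => h.1 rfl⟩

@[simp]
theorem strongProd_adj {G : SimpleGraph α} {H : SimpleGraph β} {x y : α × β} :
    (G.strongProd H).Adj x y ↔ x ≠ y ∧ (x.1 = y.1 ∨ G.Adj x.1 y.1) ∧ (x.2 = y.2 ∨ H.Adj x.2 y.2) :=
  Iff.rfl

def join (G : SimpleGraph α) (H : SimpleGraph β) : SimpleGraph (α ⊕ β) where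
  Adj
    | .inl a, .inl b => G.Adj a b
    | .inr a, .inr b => H.Adj a b
    | _, _ => True
  symm := ⟨by
    rintro (a | a) (b | b) h
    exacts [h.symm, trivial, trivial, h.symm]⟩
  loopless := ⟨by
    rintro (a | a) h
    exacts [G.loopless.irrefl a h, H.loopless.irrefl a h]⟩

variable {G : SimpleGraph α} {H : SimpleGraph β}

@[simp] theorem join_adj_inl_inl {a b : α} : (G.join H).Adj (.inl a) (.inl b) ↔ G.Adj a b := Iff.rfl

end Operations

variable {V : Type*} {G : SimpleGraph V}

theorem Connected.mem_of_adj_closed (hG : G.Connected) {S : Set V}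
    (hS : ∀ ⦃u v⦄, G.Adj u v → u ∈ S → v ∈ S) {u : V} (hu : u ∈ S) (v : V) : v ∈ S := by
  obtain ⟨w⟩ := hG.preconnected u v
  induction w with
  | nil => exact hu
  | cons h _ ih => exact ih (hS h hu)

theorem Connected.exists_adj (hG : G.Connected) (h : ¬ G.Colorable 1) (v : V) : ∃ w, G.Adj v w := by
  obtain ⟨a, b, hab⟩ := ne_bot_iff_exists_adj.1 (mt colorable_one_iff.2 h)
  have : Nontrivial V := ⟨⟨a, b, hab.ne⟩⟩
  exact hG.preconnected.exists_adj_of_nontrivial v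

/-- Otherwise the sign of `2 * h v - r` would be a proper 2-coloring. -/
theorem Connected.eq_of_forall_adj_add_eq (hG : G.Connected) (hbip : ¬ G.Colorable 2)
    {h : V → ℕ} {r : ℕ} (hr : ∀ u v, G.Adj u v → h u + h v = r) (u v : V) : h u = h v := by
  by_cases hmid : ∃ w, 2 * h w = r
  · obtain ⟨w, hw⟩ := hmid
    have hall := hG.mem_of_adj_closed (S := {v | 2 * h v = r})
      (fun a b hab (ha : 2 * h a = r) => show 2 * h b = r by have := hr a b hab; omega) hw
    have : 2 * h u = r := hall u
    have : 2 * h v = r := hall v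
    omega
  · push Not at hmid
    refine absurd ?_ hbip
    refine (Coloring.mk (fun v => decide (2 * h v < r)) fun {a b} hab => ?_).colorable
    have := hr a b hab
    have := hmid a
    have := hmid b
    simp only [ne_eq, decide_eq_decide]
    omega

theorem Connected.forall_eq_zero_or_eq_or_eq (hG : G.Connected) (hbip : ¬ G.Colorable 2)
    {h : V → ℕ} {r : ℕ} (hle : ∀ v, h v ≤ r)
    (hr : ∀ u v, G.Adj u v → h u + h v = 0 ∨ h u + h v = r) :
    (∀ v, h v = 0 ∨ h v = r) ∨ ∀ u v, h u = h v := by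
  by_cases hmid : ∃ w, 0 < h w ∧ h w < r
  · right
    obtain ⟨w, hw⟩ := hmid
    have hall := hG.mem_of_adj_closed (S := {v | 0 < h v ∧ h v < r})
      (fun a b hab (ha : 0 < h a ∧ h a < r) => show 0 < h b ∧ h b < r by
        have := hr a b hab; omega) hw
    refine hG.eq_of_forall_adj_add_eq hbip (r := r) fun a b hab => ?_
    have := hr a b hab
    have : 0 < h a := (hall a).1
    omega
  · left
    push Not at hmid
    intro v
    have := hle v
    have := hmid v
    omega

theorem exists_adj_superset_of_isClique [Nonempty V] [DecidableEq V]
    (hnbr : ∀ v, ∃ w, G.Adj v w) {T : Finset V} (hT : G.IsClique (T : Set V)) (hcard : #T ≤ 2) :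
    ∃ u v, G.Adj u v ∧ T ⊆ {u, v} := by
  rcases (by omega : #T = 0 ∨ #T = 1 ∨ #T = 2) with h | h | h
  · obtain ⟨u⟩ := ‹Nonempty V›
    obtain ⟨v, huv⟩ := hnbr u
    exact ⟨u, v, huv, by simp [card_eq_zero.1 h]⟩
  · obtain ⟨u, rfl⟩ := card_eq_one.1 h
    obtain ⟨v, huv⟩ := hnbr u
    exact ⟨u, v, huv, by simp⟩
  · obtain ⟨u, v, huv, rfl⟩ := card_eq_two.1 h
    exact ⟨u, v, hT (by simp) (by simp) huv, subset_rfl⟩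

theorem Coloring.colorable_ncard_range [Finite V] {α : Type*} (C : G.Coloring α) :
    G.Colorable (Set.range C).ncard := by
  have := Fintype.ofFinite (Set.range C)
  rw [← Nat.card_coe_set_eq, Nat.card_eq_fintype_card]
  exact (Coloring.mk (fun v => ⟨C v, v, rfl⟩) fun h he =>
    C.valid h (congrArg Subtype.val he)).colorable

/-- Recoloring one vertex of a repeated color with a fresh color. -/
theorem Coloring.exists_ncard_range_eq_succ [Finite V] (C : G.Coloring ℕ)
    (h : (Set.range C).ncard < Nat.card V) :
    ∃ C' : G.Coloring ℕ, (Set.range C').ncard = (Set.range C).ncard + 1 := by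
  classical
  obtain ⟨a, b, hab, hne⟩ : ∃ a b, C a = C b ∧ a ≠ b := by
    by_contra! hinj
    exact h.ne (Set.ncard_range_of_injective fun a b => hinj a b)
  obtain ⟨y, hy⟩ := (Set.finite_range C).exists_notMem
  have hfresh : ∀ v, C v ≠ y := fun v hv => hy ⟨v, hv⟩
  set f := Function.update C a y
  have hf : ∀ {u v}, G.Adj u v → f u ≠ f v := by
    intro u v huv
    simp only [f, Function.update_apply]
    split_ifs with hu hv hv
    · exact absurd (hu.trans hv.symm) huv.ne
    · exact (hfresh v).symm
    · exact hfresh u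
    · exact C.valid huv
  have hrange : Set.range f = insert y (Set.range C) := by
    ext x
    simp only [Set.mem_range, Set.mem_insert_iff]
    constructor
    · rintro ⟨v, rfl⟩
      rcases eq_or_ne v a with rfl | hv
      · exact .inl (Function.update_self ..)
      · exact .inr ⟨v, (Function.update_of_ne hv ..).symm⟩
    · rintro (rfl | ⟨v, rfl⟩)
      · exact ⟨a, Function.update_self ..⟩
      · rcases eq_or_ne v a with rfl | hv
        · exact ⟨b, (Function.update_of_ne hne.symm ..).trans hab.symm⟩
        · exact ⟨v, Function.update_of_ne hv ..⟩
  exact ⟨Coloring.mk f hf, by rw [← Set.ncard_insert_of_notMem hy, ← hrange]; rfl⟩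

def properColoringSizes (G : SimpleGraph V) : Set ℕ :=
  {t | ∃ C : G.Coloring ℕ, (Set.range C).ncard = t}

theorem properColoringSizes_nonempty [Fintype V] : (properColoringSizes G).Nonempty := by
  obtain ⟨C, -⟩ := (colorable_iff_exists_bdd_nat_coloring _).1 G.colorable_of_fintype
  exact ⟨_, C, rfl⟩

theorem properColoringSizes_eq_Icc [Fintype V] :
    properColoringSizes G = Set.Icc (sInf (properColoringSizes G)) (Fintype.card V) := by
  ext t
  constructor
  · rintro ⟨C, rfl⟩
    exact ⟨Nat.sInf_le ⟨C, rfl⟩, (Finite.card_range_le C).trans_eq Nat.card_eq_fintype_card⟩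
  · rintro ⟨hkt, htV⟩
    induction t, hkt using Nat.le_induction with
    | base => exact Nat.sInf_mem properColoringSizes_nonempty
    | succ t _ ih =>
      obtain ⟨C, rfl⟩ := ih (by omega)
      obtain ⟨C', hC'⟩ := C.exists_ncard_range_eq_succ (by rw [Nat.card_eq_fintype_card]; omega)
      exact ⟨C', hC'⟩

/-- The Mycielskian of `G`: `some (.inl v)` is the vertex `v`, `some (.inr v)` its shadow
(adjacent to the neighbours of `v`), and `none` the apex adjacent to all shadows. -/
def mycielskian (G : SimpleGraph V) : SimpleGraph (Option (V ⊕ V)) where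
  Adj
    | some (.inl u), some (.inl v) => G.Adj u v
    | some (.inl u), some (.inr v) => G.Adj u v
    | some (.inr u), some (.inl v) => G.Adj u v
    | some (.inr _), none => True
    | none, some (.inr _) => True
    | _, _ => False
  symm := ⟨by
    rintro (_ | u | u) (_ | v | v) h
    all_goals first | exact h.symm | exact h⟩
  loopless := ⟨by
    rintro (_ | u | u) h
    exacts [h, G.loopless.irrefl u h, h]⟩

@[simp] theorem mycielskian_adj_inl_inl {u v : V} :
    G.mycielskian.Adj (some (.inl u)) (some (.inl v)) ↔ G.Adj u v := Iff.rfl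
@[simp] theorem mycielskian_adj_inl_inr {u v : V} :
    G.mycielskian.Adj (some (.inl u)) (some (.inr v)) ↔ G.Adj u v := Iff.rfl
@[simp] theorem mycielskian_adj_inr_inl {u v : V} :
    G.mycielskian.Adj (some (.inr u)) (some (.inl v)) ↔ G.Adj u v := Iff.rfl
@[simp] theorem mycielskian_adj_inr_inr {u v : V} :
    ¬ G.mycielskian.Adj (some (.inr u)) (some (.inr v)) := id
@[simp] theorem mycielskian_adj_inr_none {u : V} : G.mycielskian.Adj (some (.inr u)) none := trivial
@[simp] theorem mycielskian_adj_none_inr {u : V} : G.mycielskian.Adj none (some (.inr u)) := trivial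
@[simp] theorem mycielskian_adj_inl_none {u : V} : ¬ G.mycielskian.Adj (some (.inl u)) none := id
@[simp] theorem mycielskian_adj_none_inl {u : V} : ¬ G.mycielskian.Adj none (some (.inl u)) := id

theorem mycielskian_cliqueFree_three (h : G.CliqueFree 3) : G.mycielskian.CliqueFree 3 := by
  classical
  have hG : ∀ x y z, G.Adj x y → G.Adj x z → G.Adj y z → False := fun x y z hxy hxz hyz =>
    h {x, y, z} (is3Clique_triple_iff.2 ⟨hxy, hxz, hyz⟩)
  intro s hs
  obtain ⟨a, b, c, hab, hac, hbc, rfl⟩ := is3Clique_iff.1 hs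
  -- shadows are independent and the apex only sees shadows; collapsing each shadow
  -- onto its vertex turns any remaining triangle into one of `G`
  rcases a with _ | a | a <;> rcases b with _ | b | b <;> rcases c with _ | c | c <;>
    try simp only [mycielskian_adj_inl_inl, mycielskian_adj_inl_inr, mycielskian_adj_inr_inl,
      mycielskian_adj_inr_inr, mycielskian_adj_inl_none, mycielskian_adj_none_inl] at hab hac hbc
  all_goals first
    | exact hG _ _ _ hab hac hbc
    | exact G.mycielskian.loopless.irrefl _ hab | exact G.mycielskian.loopless.irrefl _ hac
    | exact G.mycielskian.loopless.irrefl _ hbc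

theorem mycielskian_connected (h : ∀ v, ∃ w, G.Adj v w) : G.mycielskian.Connected := by
  refine (connected_iff_exists_forall_reachable _).2 ⟨none, ?_⟩
  rintro (_ | u | u)
  · rfl
  · obtain ⟨w, hw⟩ := h u
    exact (mycielskian_adj_none_inr (u := w)).reachable.trans
      (mycielskian_adj_inr_inl.2 hw.symm).reachable
  · exact mycielskian_adj_none_inr.reachable

/-- Mycielski: in a coloring of the Mycielskian, recoloring every vertex that has the apex's
color by the color of its shadow gives a coloring of `G` avoiding the apex's color. -/
theorem mycielskian_not_colorable {k : ℕ} (h : ¬ G.Colorable k) :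
    ¬ G.mycielskian.Colorable (k + 1) := by
  rintro ⟨C⟩
  set z := C none
  have hshadow : ∀ v, C (some (.inr v)) ≠ z := fun v => C.valid mycielskian_adj_inr_none
  let D : G.Coloring {y // y ≠ z} := Coloring.mk
    (fun v => if hv : C (some (.inl v)) = z then ⟨_, hshadow v⟩ else ⟨_, hv⟩)
    fun {u v} huv => by
      have h₁ := C.valid (mycielskian_adj_inl_inl.2 huv)
      have h₂ := C.valid (mycielskian_adj_inl_inr.2 huv)
      have h₃ := C.valid (mycielskian_adj_inr_inl.2 huv)
      split_ifs with hu hv hv <;> simp only [ne_eq, Subtype.mk.injEq]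
      exacts [absurd (hu.trans hv.symm) h₁, h₃, h₂, h₁]
  refine h ?_
  simpa [Fintype.card_subtype_compl] using D.colorable

theorem exists_connected_cliqueFree_three_not_colorable (k : ℕ) :
    ∃ (V : Type) (_ : Fintype V) (G : SimpleGraph V),
      G.Connected ∧ G.CliqueFree 3 ∧ ¬ G.Colorable (k + 1) := by
  induction k with
  | zero =>
    refine ⟨Bool, inferInstance, ⊤, connected_top, cliqueFree_of_card_lt (by simp), ?_⟩
    simp [colorable_one_iff]
  | succ k ih =>
    obtain ⟨V, _, G, hconn, hcf, hcol⟩ := ih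
    exact ⟨_, inferInstance, G.mycielskian,
      mycielskian_connected (hconn.exists_adj (fun h => hcol (h.mono (by omega)))),
      mycielskian_cliqueFree_three hcf, mycielskian_not_colorable hcol⟩

end SimpleGraph

def wormFeasibleSet {β : Type*} (G : SimpleGraph β) (n : ℕ) : Set ℕ :=
  {s | ∃ c : β → ℕ, IsKnWORM G n c ∧ (Set.range c).ncard = s}

section Transfer

variable {V W : Type*} {G : SimpleGraph V} {H : SimpleGraph W} {n : ℕ}

theorem IsKnWORM.comp_embedding (f : G ↪g H) {c : W → ℕ} (hc : IsKnWORM H n c) :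
    IsKnWORM G n (c ∘ f) := by
  intro s hs
  have hs' : H.IsNClique n (s.map f.toEmbedding) := by
    refine ⟨?_, by rw [card_map, hs.card_eq]⟩
    rw [coe_map]
    rintro _ ⟨a, ha, rfl⟩ _ ⟨b, hb, rfl⟩ hab
    exact f.map_adj_iff.2 (hs.isClique ha hb (ne_of_apply_ne _ hab))
  obtain ⟨⟨u, hu, v, hv, hne⟩, u', hu', v', hv', hne', heq⟩ := hc _ hs'
  obtain ⟨a, ha, rfl⟩ := mem_map.1 hu
  obtain ⟨b, hb, rfl⟩ := mem_map.1 hv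
  obtain ⟨a', ha', rfl⟩ := mem_map.1 hu'
  obtain ⟨b', hb', rfl⟩ := mem_map.1 hv'
  exact ⟨⟨a, ha, b, hb, hne⟩, a', ha', b', hb', fun h => hne' (congrArg _ h), heq⟩

theorem wormFeasibleSet_congr (e : G ≃g H) : wormFeasibleSet G n = wormFeasibleSet H n := by
  ext s
  constructor
  · rintro ⟨c, hc, rfl⟩
    exact ⟨c ∘ e.symm, hc.comp_embedding e.symm.toEmbedding,
      congrArg Set.ncard (e.symm.surjective.range_comp c)⟩
  · rintro ⟨c, hc, rfl⟩
    exact ⟨c ∘ e, hc.comp_embedding e.toEmbedding, congrArg Set.ncard (e.surjective.range_comp c)⟩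

end Transfer

section Blowup

variable {V : Type*} {G : SimpleGraph V} {p : ℕ}

abbrev WormVertex (V : Type*) (p : ℕ) : Type _ := (V × Fin (p + 2)) ⊕ (Fin p × Fin (p + 2))

/-- The graph `G* = (G ⊠ K_{n-1}) ∨ K_{(n-3)(n-1)}` of the paper, written with `n = p + 3`. -/
abbrev wormGraph (G : SimpleGraph V) (p : ℕ) : SimpleGraph (WormVertex V p) :=
  (G.strongProd ⊤).join ⊤

def block [DecidableEq V] (p : ℕ) (u v : V) : Finset (WormVertex V p) :=
  ({u, v} ×ˢ univ).disjSum univ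

def fiberCount (c : WormVertex V p → ℕ) (v : V) (x : ℕ) : ℕ := #{i | c (.inl (v, i)) = x}

def hubCount (c : WormVertex V p → ℕ) (x : ℕ) : ℕ := #{j | c (.inr j) = x}

theorem card_filter_block [DecidableEq V] {u v : V} (huv : u ≠ v) (c : WormVertex V p → ℕ) (x : ℕ) :
    #{w ∈ block p u v | c w = x} = fiberCount c u x + fiberCount c v x + hubCount c x := by
  simp only [block, fiberCount, hubCount, card_filter, sum_disjSum, sum_product, sum_pair huv]

theorem card_block [DecidableEq V] {u v : V} (huv : u ≠ v) :
    #(block p u v) = (p + 2) * (p + 2) := by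
  rw [block, card_disjSum, card_product, card_pair huv, card_univ, card_univ, Fintype.card_prod,
    Fintype.card_fin, Fintype.card_fin]
  ring

theorem isClique_block [DecidableEq V] {u v : V} (huv : G.Adj u v) :
    (wormGraph G p).IsClique (block p u v : Set (WormVertex V p)) := by
  rintro (⟨a, i⟩ | j) ha (⟨b, i'⟩ | j') hb hne <;>
    simp only [mem_coe, block, inl_mem_disjSum, inr_mem_disjSum, mem_product, mem_insert,
      mem_singleton, mem_univ, and_true] at ha hb
  · refine ⟨fun h => hne (congrArg _ h), ?_, by simp [em]⟩
    rcases ha with rfl | rfl <;> rcases hb with rfl | rfl <;> simp [huv, huv.symm]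
  · trivial
  · trivial
  · exact fun h => hne (congrArg _ h)

theorem exists_block_superset [DecidableEq V] [Nonempty V] (hcf : G.CliqueFree 3)
    (hnbr : ∀ v, ∃ w, G.Adj v w)
    {s : Finset (WormVertex V p)} (hs : (wormGraph G p).IsClique (s : Set (WormVertex V p))) :
    ∃ u v, G.Adj u v ∧ s ⊆ block p u v := by
  set T := s.toLeft.image Prod.fst
  have hT : G.IsClique (T : Set V) := by
    simp only [T, coe_image]
    rintro _ ⟨⟨a, i⟩, ha, rfl⟩ _ ⟨⟨b, j⟩, hb, rfl⟩ hab
    have := hs (mem_toLeft.1 ha) (mem_toLeft.1 hb) (by simp [hab])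
    simp only [join_adj_inl_inl, strongProd_adj] at this
    exact this.2.1.resolve_left hab
  have hcard : #T ≤ 2 := by
    by_contra! h
    obtain ⟨t, ht, htcard⟩ := exists_subset_card_eq h
    exact hcf t ⟨hT.subset (coe_subset.2 ht), htcard⟩
  obtain ⟨u, v, huv, hTuv⟩ := exists_adj_superset_of_isClique hnbr hT hcard
  refine ⟨u, v, huv, ?_⟩
  rintro (⟨a, i⟩ | j) hw
  · exact inl_mem_disjSum.2
      (mem_product.2 ⟨hTuv (mem_image_of_mem _ (mem_toLeft.2 hw)), mem_univ _⟩)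
  · exact inr_mem_disjSum.2 (mem_univ _)

theorem isKnWORM_wormGraph_iff [DecidableEq V] [Nonempty V] (hcf : G.CliqueFree 3)
    (hnbr : ∀ v, ∃ w, G.Adj v w) (c : WormVertex V p → ℕ) :
    IsKnWORM (wormGraph G p) (p + 3) c ↔
      ∀ u v, G.Adj u v → IsBalancedOn c (block p u v) (p + 2) := by
  constructor
  · intro h u v huv
    rw [isBalancedOn_iff_forall_subset (card_block huv.ne) (by omega)]
    exact fun s hs hcard => h s ⟨(isClique_block huv).subset (coe_subset.2 hs), hcard⟩
  · intro h s hs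
    obtain ⟨u, v, huv, hsub⟩ := exists_block_superset hcf hnbr hs.isClique
    exact (h u v huv).forall_subset (card_block huv.ne) (by omega) hsub hs.card_eq

end Blowup

section Classification

variable {V : Type*} {G : SimpleGraph V} {p : ℕ} {c : WormVertex V p → ℕ}

theorem isBalancedOn_block_iff [DecidableEq V] {u v : V} (huv : u ≠ v) {m : ℕ} :
    IsBalancedOn c (block p u v) m ↔ ∀ x,
      fiberCount c u x + fiberCount c v x + hubCount c x = 0 ∨
        fiberCount c u x + fiberCount c v x + hubCount c x = m := by
  simp only [IsBalancedOn, card_filter_block huv]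

theorem fiberCount_le {v : V} {x : ℕ} : fiberCount c v x ≤ p + 2 :=
  (card_filter_le _ _).trans_eq (card_fin _)

theorem fiberCount_eq_iff {v : V} {x : ℕ} :
    fiberCount c v x = p + 2 ↔ ∀ i, c (.inl (v, i)) = x := by
  rw [fiberCount]
  simpa using card_filter_eq_iff (s := univ) (p := fun i : Fin (p + 2) => c (.inl (v, i)) = x)

theorem fiberCount_pos_iff {v : V} {x : ℕ} : 0 < fiberCount c v x ↔ ∃ i, c (.inl (v, i)) = x := by
  simp [fiberCount, card_pos, filter_nonempty_iff]

theorem fiberCount_dichotomy [DecidableEq V] (hconn : G.Connected) (hbip : ¬ G.Colorable 2)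
    (hbal : ∀ u v, G.Adj u v → IsBalancedOn c (block p u v) (p + 2)) (x : ℕ) :
    (∀ v, fiberCount c v x = 0 ∨ fiberCount c v x = p + 2) ∨
      ∀ u v, fiberCount c u x = fiberCount c v x := by
  have hsum := fun u v (huv : G.Adj u v) => (isBalancedOn_block_iff huv.ne).1 (hbal u v huv) x
  by_cases hx : hubCount c x = 0
  · refine hconn.forall_eq_zero_or_eq_or_eq hbip (fun _ => fiberCount_le) fun u v huv => ?_
    have := hsum u v huv
    omega
  · refine .inr (hconn.eq_of_forall_adj_add_eq hbip (r := p + 2 - hubCount c x) fun u v huv => ?_)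
    have := hsum u v huv
    omega

theorem fibers_mono_or_fiberCount_const [DecidableEq V] (hconn : G.Connected)
    (hbip : ¬ G.Colorable 2)
    (hbal : ∀ u v, G.Adj u v → IsBalancedOn c (block p u v) (p + 2)) :
    (∀ v i, c (.inl (v, i)) = c (.inl (v, 0))) ∨ ∀ u v x, fiberCount c u x = fiberCount c v x := by
  refine or_iff_not_imp_left.2 fun hmono => ?_
  push Not at hmono
  obtain ⟨v₀, i₀, hi₀⟩ := hmono
  set x₀ := c (.inl (v₀, 0))
  have hpos : 0 < fiberCount c v₀ x₀ := fiberCount_pos_iff.2 ⟨0, rfl⟩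
  have hlt : fiberCount c v₀ x₀ ≠ p + 2 := fun h => hi₀ (fiberCount_eq_iff.1 h i₀)
  -- `x₀` has an intermediate multiplicity on the fiber over `v₀`, hence the same on every fiber
  have hconst₀ : ∀ w, fiberCount c w x₀ = fiberCount c v₀ x₀ := by
    rcases fiberCount_dichotomy hconn hbip hbal x₀ with h | h
    · rcases h v₀ with h | h <;> omega
    · exact fun w => h w v₀
  intro u v x
  rcases fiberCount_dichotomy hconn hbip hbal x with h | h
  · have hzero : ∀ w, fiberCount c w x = 0 := fun w => (h w).resolve_right fun hfull => by
      obtain ⟨i, hi⟩ := fiberCount_pos_iff.1 (hpos.trans_eq (hconst₀ w).symm)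
      have hx : x₀ = x := hi.symm.trans (fiberCount_eq_iff.1 hfull i)
      exact hlt (hconst₀ w ▸ hx ▸ hfull)
    rw [hzero u, hzero v]
  · exact h u v

theorem ncard_range_of_fiberCount_const [DecidableEq V]
    (hbal : ∀ u v, G.Adj u v → IsBalancedOn c (block p u v) (p + 2)) {a b : V} (hab : G.Adj a b)
    (hconst : ∀ u v x, fiberCount c u x = fiberCount c v x) : (Set.range c).ncard = p + 2 := by
  have hrange : Set.range c = ↑((block p a b).image c) := by
    ext x
    simp only [Set.mem_range, coe_image, Set.mem_image, mem_coe]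
    constructor
    · rintro ⟨⟨v, i⟩ | j, rfl⟩
      · obtain ⟨i', hi'⟩ := fiberCount_pos_iff.1
          ((fiberCount_pos_iff.2 ⟨i, rfl⟩).trans_eq (hconst v a (c (.inl (v, i)))))
        exact ⟨.inl (a, i'),
          inl_mem_disjSum.2 (mem_product.2 ⟨mem_insert_self _ _, mem_univ _⟩), hi'⟩
      · exact ⟨.inr j, inr_mem_disjSum.2 (mem_univ _), rfl⟩
    · rintro ⟨w, -, rfl⟩
      exact ⟨w, rfl⟩
  rw [hrange, Set.ncard_coe_finset, (hbal a b hab).card_image (card_block hab.ne) (by omega)]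

theorem exists_coloring_of_fibers_mono [DecidableEq V] [Finite V] [Nonempty V]
    (hnbr : ∀ v, ∃ w, G.Adj v w) (hbal : ∀ u v, G.Adj u v → IsBalancedOn c (block p u v) (p + 2))
    (hmono : ∀ v i, c (.inl (v, i)) = c (.inl (v, 0))) :
    ∃ C : G.Coloring ℕ, (Set.range c).ncard = (Set.range C).ncard + p := by
  set f : V → ℕ := fun v => c (.inl (v, 0))
  have hsum := fun u v (huv : G.Adj u v) => (isBalancedOn_block_iff huv.ne).1 (hbal u v huv)
  have hfib : ∀ v x, fiberCount c v x = if f v = x then p + 2 else 0 := by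
    intro v x
    simp only [fiberCount, hmono v, f]
    split_ifs with h <;> simp [h]
  have hf : ∀ {u v}, G.Adj u v → f u ≠ f v := by
    intro u v huv hfuv
    have := hsum u v huv (f u)
    rw [hfib, hfib, if_pos rfl, if_pos hfuv.symm] at this
    omega
  have hhub_f : ∀ v, hubCount c (f v) = 0 := by
    intro v
    obtain ⟨w, hvw⟩ := hnbr v
    have := hsum v w hvw (f v)
    rw [hfib v, if_pos rfl] at this
    omega
  set P := univ.image fun j => c (.inr j)
  have hhub : ∀ x ∈ P, hubCount c x = p + 2 := by
    intro x hx
    obtain ⟨j, -, rfl⟩ := mem_image.1 hx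
    have hpos : 0 < hubCount c (c (.inr j)) := card_pos.2 ⟨j, mem_filter.2 ⟨mem_univ _, rfl⟩⟩
    have hne : ∀ v, f v ≠ c (.inr j) := fun v h => by
      rw [← h, hhub_f] at hpos
      exact hpos.false
    obtain ⟨a⟩ := ‹Nonempty V›
    obtain ⟨b, hab⟩ := hnbr a
    have := hsum a b hab (c (.inr j))
    rw [hfib, hfib, if_neg (hne a), if_neg (hne b)] at this
    omega
  have hP : #P = p := by
    have h : #(univ : Finset (Fin p × Fin (p + 2))) = ∑ x ∈ P, hubCount c x :=
      card_eq_sum_card_image _ _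
    rw [sum_congr rfl hhub, sum_const, smul_eq_mul, card_univ, Fintype.card_prod, Fintype.card_fin,
      Fintype.card_fin] at h
    exact (Nat.eq_of_mul_eq_mul_right (by omega) h).symm
  have hrange : Set.range c = Set.range f ∪ ↑P := by
    ext x
    simp only [Set.mem_range, Set.mem_union, coe_image, coe_univ, Set.image_univ, P]
    constructor
    · rintro ⟨⟨v, i⟩ | j, rfl⟩
      · exact .inl ⟨v, (hmono v i).symm⟩
      · exact .inr ⟨j, rfl⟩
    · rintro (⟨v, rfl⟩ | ⟨j, rfl⟩) <;> exact ⟨_, rfl⟩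
  have hdisj : Disjoint (Set.range f) ↑P := by
    rw [Set.disjoint_left]
    rintro _ ⟨v, rfl⟩ hv
    have := hhub _ hv
    rw [hhub_f] at this
    omega
  refine ⟨Coloring.mk f hf, ?_⟩
  rw [hrange, Set.ncard_union_eq hdisj, Set.ncard_coe_finset, hP]
  rfl

theorem ncard_range_of_isKnWORM [DecidableEq V] [Finite V] (hcf : G.CliqueFree 3)
    (hconn : G.Connected) (hbip : ¬ G.Colorable 2) (hc : IsKnWORM (wormGraph G p) (p + 3) c) :
    (Set.range c).ncard = p + 2 ∨
      ∃ C : G.Coloring ℕ, (Set.range c).ncard = (Set.range C).ncard + p := by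
  have := hconn.nonempty
  have hnbr := hconn.exists_adj fun h => hbip (h.mono one_le_two)
  have hbal := (isKnWORM_wormGraph_iff hcf hnbr c).1 hc
  rcases fibers_mono_or_fiberCount_const hconn hbip hbal with hmono | hconst
  · exact .inr (exists_coloring_of_fibers_mono hnbr hbal hmono)
  · obtain ⟨a⟩ := this
    obtain ⟨b, hab⟩ := hnbr a
    exact .inl (ncard_range_of_fiberCount_const hbal hab hconst)

end Classification

section Colorings

variable {V : Type*} {G : SimpleGraph V} {p : ℕ}

def columnColoring : WormVertex V p → ℕ :=
  Sum.elim (fun q => q.2) fun j => j.2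

theorem isBalancedOn_columnColoring [DecidableEq V] {u v : V} (huv : u ≠ v) :
    IsBalancedOn (columnColoring (V := V) (p := p)) (block p u v) (p + 2) := by
  rw [isBalancedOn_block_iff huv]
  intro x
  set N := #{i : Fin (p + 2) | (i : ℕ) = x}
  have hN : N ≤ 1 := card_le_one.2 fun i hi j hj =>
    Fin.ext ((mem_filter.1 hi).2.trans (mem_filter.1 hj).2.symm)
  have hfib : ∀ w : V, fiberCount (p := p) columnColoring w x = N := fun w => rfl
  have hhub : hubCount (columnColoring (V := V) (p := p)) x = p * N := by
    change #{j : Fin p × Fin (p + 2) | (j.2 : ℕ) = x} = _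
    rw [← univ_product_univ, filter_product_right (fun i : Fin (p + 2) => (i : ℕ) = x),
      card_product, card_univ, Fintype.card_fin]
  rw [hfib, hfib, hhub]
  rcases Nat.le_one_iff_eq_zero_or_eq_one.1 hN with h | h <;> rw [h] <;> omega

theorem ncard_range_columnColoring [Nonempty V] :
    (Set.range (columnColoring (V := V) (p := p))).ncard = p + 2 := by
  have hrange : Set.range (columnColoring (V := V) (p := p)) =
      Set.range (Fin.val : Fin (p + 2) → ℕ) := by
    ext x
    constructor
    · rintro ⟨⟨v, i⟩ | ⟨a, i⟩, rfl⟩ <;> exact ⟨i, rfl⟩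
    · rintro ⟨i, rfl⟩
      obtain ⟨v⟩ := ‹Nonempty V›
      exact ⟨.inl (v, i), rfl⟩
  rw [hrange, Set.ncard_range_of_injective Fin.val_injective, Nat.card_eq_fintype_card,
    Fintype.card_fin]

def liftColoring (C : G.Coloring ℕ) : WormVertex V p → ℕ :=
  Sum.elim (fun q => C q.1 + p) fun j => j.1

theorem isBalancedOn_liftColoring [DecidableEq V] (C : G.Coloring ℕ) {u v : V} (huv : G.Adj u v) :
    IsBalancedOn (liftColoring (p := p) C) (block p u v) (p + 2) := by
  rw [isBalancedOn_block_iff huv.ne]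
  intro x
  set N := #{a : Fin p | (a : ℕ) = x}
  have hN : N ≤ 1 := card_le_one.2 fun i hi j hj =>
    Fin.ext ((mem_filter.1 hi).2.trans (mem_filter.1 hj).2.symm)
  have hN0 : p ≤ x → N = 0 := fun hx =>
    card_eq_zero.2 (filter_eq_empty_iff.2 fun a _ ha => by have := a.isLt; omega)
  have hfib : ∀ w, fiberCount (liftColoring (p := p) C) w x = if C w + p = x then p + 2 else 0 := by
    intro w
    simp only [fiberCount, liftColoring, Sum.elim_inl]
    split_ifs with h <;> simp [h]
  have hhub : hubCount (liftColoring (p := p) C) x = N * (p + 2) := by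
    change #{j : Fin p × Fin (p + 2) | (j.1 : ℕ) = x} = _
    rw [← univ_product_univ, filter_product_left (fun a : Fin p => (a : ℕ) = x), card_product,
      card_univ, Fintype.card_fin]
  have hCuv := C.valid huv
  rw [hfib, hfib, hhub]
  split_ifs with hu hv hv
  · exact absurd (by omega) hCuv
  · rw [hN0 (by omega)]
    omega
  · rw [hN0 (by omega)]
    omega
  · rcases Nat.le_one_iff_eq_zero_or_eq_one.1 hN with h | h <;> rw [h] <;> omega

theorem ncard_range_liftColoring [Finite V] (C : G.Coloring ℕ) :
    (Set.range (liftColoring (p := p) C)).ncard = (Set.range C).ncard + p := by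
  have hrange : Set.range (liftColoring (p := p) C) =
      (· + p) '' Set.range C ∪ Set.range (Fin.val : Fin p → ℕ) := by
    ext x
    constructor
    · rintro ⟨⟨v, i⟩ | ⟨a, i⟩, rfl⟩
      exacts [.inl ⟨C v, ⟨v, rfl⟩, rfl⟩, .inr ⟨a, rfl⟩]
    · rintro (⟨_, ⟨v, rfl⟩, rfl⟩ | ⟨a, rfl⟩)
      exacts [⟨.inl (v, 0), rfl⟩, ⟨.inr (a, 0), rfl⟩]
  have hdisj : Disjoint ((· + p) '' Set.range C) (Set.range (Fin.val : Fin p → ℕ)) := by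
    rw [Set.disjoint_left]
    rintro _ ⟨_, ⟨v, rfl⟩, rfl⟩ ⟨a, ha⟩
    dsimp only at ha
    have := a.isLt
    omega
  rw [hrange, Set.ncard_union_eq hdisj, Set.ncard_image_of_injective _ (add_left_injective p),
    Set.ncard_range_of_injective Fin.val_injective, Nat.card_eq_fintype_card, Fintype.card_fin]

theorem wormFeasibleSet_wormGraph [DecidableEq V] [Finite V] (hcf : G.CliqueFree 3)
    (hconn : G.Connected) (hbip : ¬ G.Colorable 2) :
    wormFeasibleSet (wormGraph G p) (p + 3) =
      insert (p + 2) ((· + p) '' properColoringSizes G) := by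
  have := hconn.nonempty
  have hnbr := hconn.exists_adj fun h => hbip (h.mono one_le_two)
  ext s
  constructor
  · rintro ⟨c, hc, rfl⟩
    rcases ncard_range_of_isKnWORM hcf hconn hbip hc with h | ⟨C, hC⟩
    · exact .inl h
    · exact .inr ⟨_, ⟨C, rfl⟩, hC.symm⟩
  · rintro (rfl | ⟨_, ⟨C, rfl⟩, rfl⟩)
    · exact ⟨columnColoring, (isKnWORM_wormGraph_iff hcf hnbr _).2 fun u v huv =>
        isBalancedOn_columnColoring huv.ne, ncard_range_columnColoring⟩
    · exact ⟨liftColoring C, (isKnWORM_wormGraph_iff hcf hnbr _).2 fun u v huv =>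
        isBalancedOn_liftColoring C huv, ncard_range_liftColoring C⟩

end Colorings

theorem stmt10_general (n ℓ : ℕ) (hn : 3 ≤ n) :
    ∃ (m : ℕ) (G : SimpleGraph (Fin m)) (k N : ℕ), ℓ + 3 ≤ k ∧ k ≤ N ∧
      {s | ∃ c : Fin m → ℕ, IsKnWORM G n c ∧ (Set.range c).ncard = s} =
        {n - 1} ∪ Set.Icc (k + n - 3) (N + n - 3) := by
  classical
  obtain ⟨p, rfl⟩ : ∃ p, n = p + 3 := ⟨n - 3, by omega⟩
  obtain ⟨V, _, G, hconn, hcf, hcol⟩ := exists_connected_cliqueFree_three_not_colorable (ℓ + 1)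
  have hsizes := properColoringSizes_eq_Icc (G := G)
  set k := sInf (properColoringSizes G)
  obtain ⟨C, hC⟩ : k ∈ properColoringSizes G := Nat.sInf_mem properColoringSizes_nonempty
  refine ⟨_, (wormGraph G p).overFin rfl, k, Fintype.card V, ?_, ?_, ?_⟩
  · by_contra! h
    exact hcol ((hC ▸ C.colorable_ncard_range).mono (by omega))
  · exact hC ▸ (Finite.card_range_le C).trans_eq Nat.card_eq_fintype_card
  · change wormFeasibleSet _ _ = _
    rw [← wormFeasibleSet_congr (overFinIso _ rfl),
      wormFeasibleSet_wormGraph hcf hconn fun h => hcol (h.mono (by omega)), hsizes,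
      Set.image_add_const_Icc]
    ext s
    simp only [Set.mem_insert_iff, Set.mem_union, Set.mem_singleton_iff, Set.mem_Icc]
    omega

/-- For every `n ≥ 3` and `ℓ ≥ 1` there is a `K_n`-WORM colorable graph `G*`
whose `K_n`-WORM feasible set (the set of numbers of colors realizable by
`K_n`-WORM colorings) equals `{n-1} ∪ {k+n-3, …, N+n-3}` for some integers
`k ≥ ℓ+3` and `N ≥ k`; in particular the feasible set has a gap of size at
least `ℓ`. -/
theorem stmt10 (n ℓ : ℕ) (hn : 3 ≤ n) (hℓ : 1 ≤ ℓ) :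
    ∃ (m : ℕ) (G : SimpleGraph (Fin m)) (k N : ℕ), ℓ + 3 ≤ k ∧ k ≤ N ∧
      {s | ∃ c : Fin m → ℕ, IsKnWORM G n c ∧ (Set.range c).ncard = s} =
        {n - 1} ∪ Set.Icc (k + n - 3) (N + n - 3) :=
  stmt10_general n ℓ hn
end
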